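/- arXiv:2002.04418 — 8 statements merged into one kernel-verified Lean document; each statement's English description precedes it below -/
import Mathlib

section
/- Let f be a polynomial with complex coefficients of degree at least 1 with Im f(0) = 0. Then for every r > 0 the curve f_r has at least one upcrossing and at least one downcrossing in [0, 2π). -/
/-- `t` is an upcrossing of the curve `θ ↦ f(r·exp(iθ))`. -/
def IsUpcrossing (f : Polynomial ℂ) (r t : ℝ) : Prop :=
  (f.eval ((r : ℂ) * Complex.exp (Complex.I * t))).im = 0 ∧
  ∃ δ > (0 : ℝ),
    (∀ s ∈ Set.Icc (t - δ) t, (f.eval ((r : ℂ) * Complex.exp (Complex.I * s))).im ≤ 0) ∧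
    (∀ s ∈ Set.Icc t (t + δ), (f.eval ((r : ℂ) * Complex.exp (Complex.I * s))).im ≥ 0)

/-- `t` is a downcrossing of the curve `θ ↦ f(r·exp(iθ))`. -/
def IsDowncrossing (f : Polynomial ℂ) (r t : ℝ) : Prop :=
  (f.eval ((r : ℂ) * Complex.exp (Complex.I * t))).im = 0 ∧
  ∃ δ > (0 : ℝ),
    (∀ s ∈ Set.Icc (t - δ) t, (f.eval ((r : ℂ) * Complex.exp (Complex.I * s))).im ≥ 0) ∧
    (∀ s ∈ Set.Icc t (t + δ), (f.eval ((r : ℂ) * Complex.exp (Complex.I * s))).im ≤ 0)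

open Real

open Set in
/-- Key real-variable lemma: an analytic periodic function taking both signs has an
"upcrossing" point. -/
lemma exists_crossing_of_analytic (g : ℝ → ℝ) (hg : ∀ t, AnalyticAt ℝ g t)
    (hper : Function.Periodic g (2 * π))
    (t0 t1 : ℝ) (hneg : g t0 < 0) (hpos : 0 < g t1) :
    ∃ T, g T = 0 ∧ ∃ δ > (0 : ℝ),
      (∀ s ∈ Set.Icc (T - δ) T, g s ≤ 0) ∧ (∀ s ∈ Set.Icc T (T + δ), 0 ≤ g s) := by
  have gcont : Continuous g := continuous_iff_continuousAt.2 fun t => (hg t).continuousAt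
  have h2pi : (0 : ℝ) < 2 * π := by positivity
  obtain ⟨n, hn⟩ := exists_nat_ge ((t0 - t1) / (2 * π))
  have hs1 : t0 ≤ t1 + n * (2 * π) := by
    have := (div_le_iff₀ h2pi).1 hn
    linarith
  set S : Set ℝ := {s | t0 ≤ s ∧ 0 < g s} with hSdef
  have hSne : S.Nonempty := ⟨t1 + n * (2 * π), hs1, by
    have := (hper.nat_mul n) t1
    simpa [this] using hpos⟩
  have hbdd : BddBelow S := ⟨t0, fun s hs => hs.1⟩
  set T := sInf S with hTdef
  have hT0 : t0 ≤ T := le_csInf hSne fun s hs => hs.1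
  have hle : ∀ s, t0 ≤ s → s < T → g s ≤ 0 := by
    intro s hs hsT
    by_contra h
    exact absurd (csInf_le hbdd ⟨hs, lt_of_not_ge h⟩) (not_le.2 hsT)
  have hgT : g T = 0 := by
    rcases lt_trichotomy (g T) 0 with h | h | h
    · exfalso
      have hopen : IsOpen {x : ℝ | g x < 0} := isOpen_lt gcont continuous_const
      obtain ⟨ε, hε, hball⟩ := Metric.isOpen_iff.1 hopen T h
      obtain ⟨s, hsS, hs⟩ := exists_lt_of_csInf_lt hSne (show sInf S < T + ε by linarith)
      have hTs : T ≤ s := csInf_le hbdd hsS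
      have : g s < 0 := hball (by
        rw [Metric.mem_ball, Real.dist_eq, abs_of_nonneg (by linarith)]
        linarith)
      linarith [hsS.2]
    · exact h
    · exfalso
      have ht0T : t0 < T := hT0.lt_of_ne (fun e => by rw [← e] at h; linarith)
      have hopen : IsOpen {x : ℝ | 0 < g x} := isOpen_lt continuous_const gcont
      obtain ⟨ε, hε, hball⟩ := Metric.isOpen_iff.1 hopen T h
      obtain ⟨m, hm1, hm2, hm3⟩ : ∃ m : ℝ, 0 < m ∧ m < ε ∧ m ≤ T - t0 :=
        ⟨min (ε / 2) ((T - t0) / 2), lt_min (by linarith) (by linarith),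
          by have := min_le_left (ε / 2) ((T - t0) / 2); linarith,
          by have := min_le_right (ε / 2) ((T - t0) / 2); linarith⟩
      have h1 : 0 < g (T - m) := hball (by
        rw [Metric.mem_ball, Real.dist_eq, abs_of_nonpos (by linarith)]
        linarith)
      have h3 := csInf_le hbdd (show T - m ∈ S from ⟨by linarith, h1⟩)
      rw [← hTdef] at h3
      linarith
  have ht0T : t0 < T := hT0.lt_of_ne (fun e => by rw [← e] at hgT; linarith)
  have hiso : ∀ᶠ s in nhdsWithin T {T}ᶜ, g s ≠ 0 := by
    rcases (hg T).eventually_eq_zero_or_eventually_ne_zero with h | h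
    · exfalso
      have hz : Set.EqOn g 0 Set.univ :=
        AnalyticOnNhd.eqOn_zero_of_preconnected_of_eventuallyEq_zero
          (fun x _ => hg x) isPreconnected_univ (Set.mem_univ T) h
      have := hz (Set.mem_univ t1)
      simp only [Pi.zero_apply] at this
      linarith
    · exact h
  rw [eventually_nhdsWithin_iff] at hiso
  obtain ⟨ε, hε, hball⟩ := Metric.eventually_nhds_iff.1 hiso
  have hright : ∀ u, T < u → u < T + ε → 0 < g u := by
    intro u hTu huε
    rcases lt_trichotomy (g u) 0 with h | h | h
    · exfalso
      obtain ⟨s, hsS, hsu⟩ := exists_lt_of_csInf_lt hSne (show sInf S < u from hTu)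
      have hTs : T ≤ s := csInf_le hbdd hsS
      have hsT : T < s := hTs.lt_of_ne (fun e => by rw [← e] at hsS; linarith [hsS.2, hgT])
      obtain ⟨c, hc, hc0⟩ := intermediate_value_Ioo' hsu.le gcont.continuousOn
        (show (0:ℝ) ∈ Set.Ioo (g u) (g s) from ⟨h, hsS.2⟩)
      refine hball ?_ ?_ hc0
      · rw [Real.dist_eq, abs_of_nonneg (by linarith [hc.1])]
        linarith [hc.2]
      · simp only [Set.mem_compl_iff, Set.mem_singleton_iff]
        intro e; rw [e] at hc; linarith [hc.1]
    · exfalso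
      refine hball ?_ ?_ h
      · rw [Real.dist_eq, abs_of_nonneg (by linarith)]; linarith
      · simp only [Set.mem_compl_iff, Set.mem_singleton_iff]
        intro e; rw [e] at hTu; linarith
    · exact h
  refine ⟨T, hgT, min (ε / 2) (T - t0), lt_min (by linarith) (by linarith), ?_, ?_⟩
  · rintro s ⟨h1, h2⟩
    rcases eq_or_lt_of_le h2 with e | hlt
    · rw [e, hgT]
    · refine hle s ?_ hlt
      have := min_le_right (ε / 2) (T - t0)
      linarith
  · rintro s ⟨h1, h2⟩
    rcases eq_or_lt_of_le h1 with e | hlt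
    · rw [← e, hgT]
    · refine (hright s hlt ?_).le
      have := min_le_left (ε / 2) (T - t0)
      linarith

open Complex Polynomial in
lemma curve_im_not_all_zero (f : Polynomial ℂ) (hf : 1 ≤ f.natDegree) {r : ℝ} (hr : 0 < r) :
    ¬ (∀ t : ℝ, (f.eval ((r : ℂ) * Complex.exp (Complex.I * t))).im = 0) := by
  intro H
  have hf0 : f ≠ 0 := fun h => by simp [h] at hf
  set n := f.natDegree with hn
  have hn1 : 1 ≤ n := hf
  set P : Polynomial ℂ :=
    (∑ k ∈ Finset.range (n + 1), Polynomial.C (f.coeff k * (r : ℂ) ^ k) * Polynomial.X ^ (n + k)) -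
    (∑ k ∈ Finset.range (n + 1),
      Polynomial.C ((starRingEnd ℂ) (f.coeff k) * (r : ℂ) ^ k) * Polynomial.X ^ (n - k)) with hP
  have hroot : ∀ t : ℝ, P.eval (Complex.exp (Complex.I * t)) = 0 := by
    intro t
    set w := Complex.exp (Complex.I * t) with hw
    have hw1 : w * (starRingEnd ℂ) w = 1 := by
      rw [hw, ← Complex.exp_conj, ← Complex.exp_add,
        show Complex.I * (t : ℂ) + (starRingEnd ℂ) (Complex.I * (t : ℂ)) = 0 by
          simp [map_mul, Complex.conj_I, Complex.conj_ofReal]]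
      exact Complex.exp_zero
    have hreal : (starRingEnd ℂ) (f.eval ((r : ℂ) * w)) = f.eval ((r : ℂ) * w) :=
      Complex.conj_eq_iff_im.2 (H t)
    have hsum1 : (∑ k ∈ Finset.range (n + 1), (f.coeff k * (r : ℂ) ^ k) * w ^ (n + k))
        = w ^ n * f.eval ((r : ℂ) * w) := by
      rw [Polynomial.eval_eq_sum_range, ← hn, Finset.mul_sum]
      refine Finset.sum_congr rfl fun k _ => ?_
      rw [pow_add, mul_pow]; ring
    have hsum2 : (∑ k ∈ Finset.range (n + 1),
          ((starRingEnd ℂ) (f.coeff k) * (r : ℂ) ^ k) * w ^ (n - k))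
        = w ^ n * (starRingEnd ℂ) (f.eval ((r : ℂ) * w)) := by
      conv_rhs => rw [Polynomial.eval_eq_sum_range]
      rw [← hn, map_sum, Finset.mul_sum]
      refine Finset.sum_congr rfl fun k hk => ?_
      have hk' : k ≤ n := Nat.lt_succ_iff.1 (Finset.mem_range.1 hk)
      have hwk : w ^ (n - k) = w ^ n * ((starRingEnd ℂ) w) ^ k := by
        have h1 : w ^ (n - k) * (w * (starRingEnd ℂ) w) ^ k
            = w ^ n * ((starRingEnd ℂ) w) ^ k := by
          rw [mul_pow, ← mul_assoc, ← pow_add, Nat.sub_add_cancel hk']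
        rw [hw1, one_pow, mul_one] at h1
        exact h1
      rw [hwk]
      simp only [map_mul, map_pow, Complex.conj_ofReal]
      ring
    rw [hP]
    simp only [Polynomial.eval_sub, Polynomial.eval_finset_sum, Polynomial.eval_mul,
      Polynomial.eval_C, Polynomial.eval_pow, Polynomial.eval_X]
    rw [hsum1, hsum2, hreal]
    ring
  have hcoeff : P.coeff (2 * n) = f.coeff n * (r : ℂ) ^ n := by
    rw [hP, Polynomial.coeff_sub, Polynomial.finset_sum_coeff, Polynomial.finset_sum_coeff]
    have e1 : ∀ k ∈ Finset.range (n + 1),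
        (Polynomial.C (f.coeff k * (r : ℂ) ^ k) * Polynomial.X ^ (n + k)).coeff (2 * n)
        = if k = n then f.coeff n * (r : ℂ) ^ n else 0 := by
      intro k hk
      rw [Polynomial.coeff_C_mul, Polynomial.coeff_X_pow]
      by_cases h : k = n
      · subst h; rw [if_pos (two_mul n), if_pos rfl, mul_one]
      · rw [if_neg (by omega), if_neg h, mul_zero]
    have e2 : ∀ k ∈ Finset.range (n + 1),
        (Polynomial.C ((starRingEnd ℂ) (f.coeff k) * (r : ℂ) ^ k)
          * Polynomial.X ^ (n - k)).coeff (2 * n) = 0 := by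
      intro k hk
      have hk' : k ≤ n := Nat.lt_succ_iff.1 (Finset.mem_range.1 hk)
      rw [Polynomial.coeff_C_mul, Polynomial.coeff_X_pow, if_neg (by omega), mul_zero]
    rw [Finset.sum_congr rfl e1, Finset.sum_congr rfl e2, Finset.sum_ite_eq']
    simp
  have hc : f.coeff n ≠ 0 := Polynomial.leadingCoeff_ne_zero.mpr hf0
  have hPne : P ≠ 0 := by
    intro h
    rw [h] at hcoeff
    simp only [Polynomial.coeff_zero] at hcoeff
    rcases mul_eq_zero.1 hcoeff.symm with h' | h'
    · exact hc h'
    · exact pow_ne_zero n (Complex.ofReal_ne_zero.2 hr.ne') h'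
  have hinj : Set.InjOn (fun t : ℝ => Complex.exp (Complex.I * t)) (Set.Ioo (0 : ℝ) 1) := by
    intro a ha b hb he
    simp only at he
    have h1 : Complex.exp (Complex.I * a - Complex.I * b) = 1 := by
      rw [Complex.exp_sub, he, div_self (Complex.exp_ne_zero _)]
    rw [Complex.exp_eq_one_iff] at h1
    obtain ⟨m, hm⟩ := h1
    have h2 : a - b = m * (2 * π) := by
      have := congrArg Complex.im hm
      simpa using this
    have hm0 : m = 0 := by
      by_contra hm0
      have h3 : (1 : ℝ) ≤ |(m : ℝ)| := by exact_mod_cast Int.one_le_abs hm0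
      have h4 : |a - b| < 1 := abs_lt.2 ⟨by linarith [ha.1, hb.2], by linarith [ha.2, hb.1]⟩
      have h5 : |a - b| = |(m : ℝ)| * (2 * π) := by
        rw [h2, abs_mul, abs_of_pos (show (0:ℝ) < 2 * π by positivity)]
      nlinarith [Real.pi_gt_three]
    rw [hm0] at h2
    simp at h2
    linarith
  have hinf : Set.Infinite {x : ℂ | P.IsRoot x} := by
    refine Set.Infinite.mono ?_
      ((Set.Ioo_infinite (by norm_num : (0:ℝ) < 1)).image hinj)
    rintro x ⟨t, _, rfl⟩
    exact hroot t
  exact hPne (P.eq_zero_of_infinite_isRoot hinf)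

open Complex Polynomial intervalIntegral in
lemma curve_integral_zero (f : Polynomial ℂ) (h0 : (f.coeff 0).im = 0) (r : ℝ) :
    ∫ t in (0:ℝ)..(2 * π), (f.eval ((r : ℂ) * Complex.exp (Complex.I * t))).im = 0 := by
  have hFeq : ∀ t : ℝ, f.eval ((r : ℂ) * Complex.exp (Complex.I * t)) =
      ∑ k ∈ Finset.range (f.natDegree + 1),
        f.coeff k * ((r : ℂ) * Complex.exp (Complex.I * t)) ^ k :=
    fun t => Polynomial.eval_eq_sum_range _
  have hc : ∀ k : ℕ, Continuous
      (fun t : ℝ => f.coeff k * ((r : ℂ) * Complex.exp (Complex.I * t)) ^ k) := by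
    intro k; fun_prop
  have hF : Continuous (fun t : ℝ => f.eval ((r : ℂ) * Complex.exp (Complex.I * t))) := by
    simp only [hFeq]
    exact continuous_finset_sum _ fun k _ => hc k
  have hterm : ∀ k : ℕ,
      (∫ t in (0:ℝ)..(2 * π), f.coeff k * ((r : ℂ) * Complex.exp (Complex.I * t)) ^ k)
      = if k = 0 then (2 * π : ℝ) * f.coeff 0 else 0 := by
    intro k
    rcases Nat.eq_zero_or_pos k with rfl | hk
    · simp [Complex.real_smul]
    · rw [if_neg hk.ne']
      have h1 : ∀ t : ℝ, f.coeff k * ((r : ℂ) * Complex.exp (Complex.I * t)) ^ k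
          = (f.coeff k * (r : ℂ) ^ k) * Complex.exp (((k : ℂ) * Complex.I) * t) := by
        intro t
        rw [mul_pow, ← Complex.exp_nat_mul, mul_assoc ((k : ℂ)) Complex.I (t : ℂ)]
        ring
      simp only [h1]
      rw [intervalIntegral.integral_const_mul, integral_exp_mul_complex
        (by simp [hk.ne', Complex.ext_iff] : ((k : ℂ) * Complex.I) ≠ 0)]
      have h2 : (k : ℂ) * Complex.I * ((2 * π : ℝ) : ℂ) = ((k : ℤ) : ℂ) * (2 * π * Complex.I) := by
        push_cast; ring
      rw [h2, Complex.exp_int_mul_two_pi_mul_I]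
      simp
  have key : (∫ t in (0:ℝ)..(2 * π), f.eval ((r : ℂ) * Complex.exp (Complex.I * t)))
      = (2 * π : ℝ) * f.coeff 0 := by
    calc (∫ t in (0:ℝ)..(2 * π), f.eval ((r : ℂ) * Complex.exp (Complex.I * t)))
        = ∫ t in (0:ℝ)..(2 * π), ∑ k ∈ Finset.range (f.natDegree + 1),
            f.coeff k * ((r : ℂ) * Complex.exp (Complex.I * t)) ^ k := by simp only [hFeq]
      _ = ∑ k ∈ Finset.range (f.natDegree + 1),
            ∫ t in (0:ℝ)..(2 * π), f.coeff k * ((r : ℂ) * Complex.exp (Complex.I * t)) ^ k :=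
          intervalIntegral.integral_finset_sum fun k _ => (hc k).intervalIntegrable _ _
      _ = ∑ k ∈ Finset.range (f.natDegree + 1),
            (if k = 0 then (2 * π : ℝ) * f.coeff 0 else 0) := by
          exact Finset.sum_congr rfl fun k _ => hterm k
      _ = (2 * π : ℝ) * f.coeff 0 := by
          rw [Finset.sum_ite_eq' (Finset.range (f.natDegree + 1)) 0]
          simp
  have him := Complex.imCLM.intervalIntegral_comp_comm
    (μ := MeasureTheory.volume) (a := (0:ℝ)) (b := 2 * π)
    (hF.intervalIntegrable 0 (2 * π))
  simp only [Complex.imCLM_apply] at him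
  rw [him, key]
  simp [h0]

open Complex in
lemma curve_analytic (f : Polynomial ℂ) (r : ℝ) (t : ℝ) :
    AnalyticAt ℝ (fun s : ℝ => (f.eval ((r : ℂ) * Complex.exp (Complex.I * s))).im) t := by
  have h1 : AnalyticAt ℝ (fun s : ℝ => (s : ℂ)) t := Complex.ofRealCLM.analyticAt t
  have h2 : AnalyticAt ℂ (fun z : ℂ => f.eval ((r : ℂ) * Complex.exp (Complex.I * z))) (t : ℂ) := by
    have hexp : AnalyticAt ℂ (fun z : ℂ => (r : ℂ) * Complex.exp (Complex.I * z)) (t : ℂ) :=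
      analyticAt_const.mul (analyticAt_cexp.comp (analyticAt_const.mul analyticAt_id))
    simpa using hexp.aeval_polynomial f
  exact (Complex.imCLM.analyticAt _).comp ((h2.restrictScalars).comp h1)

open Complex in
lemma curve_periodic (f : Polynomial ℂ) (r : ℝ) :
    Function.Periodic (fun s : ℝ => (f.eval ((r : ℂ) * Complex.exp (Complex.I * s))).im)
      (2 * π) := by
  intro s
  have h : Complex.I * ((s + 2 * π : ℝ) : ℂ) = Complex.I * s + 2 * π * Complex.I := by
    push_cast; ring
  simp only [h, Complex.exp_add, Complex.exp_two_pi_mul_I, mul_one]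

theorem exists_upcrossing_and_downcrossing (f : Polynomial ℂ) (hf : 1 ≤ f.natDegree)
    (h0 : (f.coeff 0).im = 0) :
    ∀ r : ℝ, 0 < r →
      (∃ t ∈ Set.Ico (0 : ℝ) (2 * π), IsUpcrossing f r t) ∧
      (∃ t' ∈ Set.Ico (0 : ℝ) (2 * π), IsDowncrossing f r t') := by
  intro r hr
  have h2pi : (0 : ℝ) < 2 * π := by positivity
  have hga := curve_analytic f r
  have hgp := curve_periodic f r
  have hnz := curve_im_not_all_zero f hf hr
  have hint := curve_integral_zero f h0 r
  set g : ℝ → ℝ := fun s => (f.eval ((r : ℂ) * Complex.exp (Complex.I * s))).im with hgdef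
  have hcont : Continuous g := continuous_iff_continuousAt.2 fun t => (hga t).continuousAt
  -- generic transfer of a crossing into [0, 2π)
  have transfer : ∀ (u : ℝ → ℝ), Function.Periodic u (2 * π) → ∀ T : ℝ, u T = 0 →
      (∃ δ > (0:ℝ), (∀ s ∈ Set.Icc (T - δ) T, u s ≤ 0) ∧ (∀ s ∈ Set.Icc T (T + δ), 0 ≤ u s)) →
      ∃ t ∈ Set.Ico (0:ℝ) (2 * π), u t = 0 ∧ ∃ δ > (0:ℝ),
        (∀ s ∈ Set.Icc (t - δ) t, u s ≤ 0) ∧ (∀ s ∈ Set.Icc t (t + δ), 0 ≤ u s) := by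
    rintro u hu T hT ⟨δ, hδ, hL, hR⟩
    refine ⟨T - ⌊T / (2 * π)⌋ * (2 * π),
      ⟨Int.sub_floor_div_mul_nonneg T h2pi, Int.sub_floor_div_mul_lt T h2pi⟩,
      by rw [hu.sub_int_mul_eq]; exact hT, δ, hδ, ?_, ?_⟩
    · intro s hs
      have he : u (s + ⌊T / (2 * π)⌋ * (2 * π)) = u s := (hu.int_mul ⌊T / (2 * π)⌋) s
      rw [← he]
      exact hL _ ⟨by linarith [hs.1], by linarith [hs.2]⟩
    · intro s hs
      have he : u (s + ⌊T / (2 * π)⌋ * (2 * π)) = u s := (hu.int_mul ⌊T / (2 * π)⌋) s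
      rw [← he]
      exact hR _ ⟨by linarith [hs.1], by linarith [hs.2]⟩
  -- g takes both signs
  obtain ⟨t, ht⟩ := not_forall.1 hnz
  have htt' : g (t - ⌊t / (2 * π)⌋ * (2 * π)) = g t := hgp.sub_int_mul_eq _
  have ht'0 : 0 ≤ t - ⌊t / (2 * π)⌋ * (2 * π) := Int.sub_floor_div_mul_nonneg t h2pi
  have ht'2 : t - ⌊t / (2 * π)⌋ * (2 * π) < 2 * π := Int.sub_floor_div_mul_lt t h2pi
  have hneg : ∃ a, g a < 0 := by
    by_contra hno
    push_neg at hno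
    have hpos : 0 < ∫ s in (0:ℝ)..(2 * π), g s :=
      intervalIntegral.integral_pos h2pi hcont.continuousOn (fun x _ => hno x)
        ⟨t - ⌊t / (2 * π)⌋ * (2 * π), ⟨ht'0, ht'2.le⟩,
          by rw [htt']; exact lt_of_le_of_ne (hno t) (Ne.symm ht)⟩
    rw [hint] at hpos
    exact lt_irrefl 0 hpos
  have hpos : ∃ b, 0 < g b := by
    by_contra hno
    push_neg at hno
    have hpos : 0 < ∫ s in (0:ℝ)..(2 * π), -g s :=
      intervalIntegral.integral_pos h2pi hcont.neg.continuousOn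
        (fun x _ => neg_nonneg.2 (hno x))
        ⟨t - ⌊t / (2 * π)⌋ * (2 * π), ⟨ht'0, ht'2.le⟩,
          by rw [htt']; exact neg_pos.2 (lt_of_le_of_ne (hno t) ht)⟩
    rw [intervalIntegral.integral_neg, hint, neg_zero] at hpos
    exact lt_irrefl 0 hpos
  obtain ⟨a, hA⟩ := hneg
  obtain ⟨b, hB⟩ := hpos
  constructor
  · obtain ⟨T, hT0, hTd⟩ := exists_crossing_of_analytic g hga hgp a b hA hB
    obtain ⟨t, htIco, hz, δ, hδ, hL, hR⟩ := transfer g hgp T hT0 hTd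
    exact ⟨t, htIco, hz, δ, hδ, hL, hR⟩
  · obtain ⟨T, hT0, hTd⟩ := exists_crossing_of_analytic (fun s => -g s)
      (fun t => (hga t).neg) (fun x => congrArg Neg.neg (hgp x)) b a (by simpa using hB) (by simpa using hA)
    obtain ⟨t, htIco, hz, δ, hδ, hL, hR⟩ := transfer (fun s => -g s) (fun x => congrArg Neg.neg (hgp x)) T hT0 hTd
    refine ⟨t, htIco, by simpa using hz, δ, hδ, ?_, ?_⟩
    · intro s hs
      have := hL s hs
      simp only [neg_nonpos] at this  -- -g s ≤ 0 → 0 ≤ g s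
      exact this
    · intro s hs
      have := hR s hs
      simp only [le_neg, neg_zero] at this
      simpa using this
end

section
/- Let f be a polynomial with complex coefficients of degree N ≥ 1. There exists R > 0 such that for every r > R there exist N distinct points 0 ≤ t₁ < t₂ < ... < t_N < 2π, each an upcrossing of f_r with Re f_r(t_j) > 0, and N distinct points 0 ≤ t'₁ < t'₂ < ... < t'_N < 2π, each a downcrossing of f_r with Re f_r(t'_j) < 0. -/
open Real

open Set Filter Topology

def UpcrossesAt (g : ℝ → ℝ) (t : ℝ) : Prop :=
  g t = 0 ∧ ∃ δ > (0 : ℝ),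
    (∀ s ∈ Icc (t - δ) t, g s ≤ 0) ∧ ∀ s ∈ Icc t (t + δ), g s ≥ 0

theorem UpcrossesAt.sub_period {g : ℝ → ℝ} {c t : ℝ} (hg : Function.Periodic g c)
    (h : UpcrossesAt g t) : UpcrossesAt g (t - c) := by
  obtain ⟨h0, δ, hδ, hleft, hright⟩ := h
  refine ⟨(hg.sub_eq t).trans h0, δ, hδ, fun s hs => ?_, fun s hs => ?_⟩
  · rw [← hg s]; exact hleft _ ⟨by linarith [hs.1], by linarith [hs.2]⟩
  · rw [← hg s]; exact hright _ ⟨by linarith [hs.1], by linarith [hs.2]⟩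

theorem exists_mem_Ioo_forall_nonpos_frequently_pos {g : ℝ → ℝ} (hg : Continuous g) {a b : ℝ}
    (hab : a < b) (ha : g a < 0) (hb : 0 < g b) :
    ∃ t ∈ Ioo a b, g t = 0 ∧ (∀ s ∈ Icc a t, g s ≤ 0) ∧ ∃ᶠ s in 𝓝[>] t, 0 < g s := by
  set S := Icc a b ∩ {s | 0 < g s}
  have hS : S.Nonempty := ⟨b, right_mem_Icc.2 hab.le, hb⟩
  have hSbdd : BddBelow S := ⟨a, fun s hs => hs.1.1⟩
  obtain ⟨⟨hat, htb⟩, hgt : 0 ≤ g (sInf S)⟩ : sInf S ∈ Icc a b ∩ {s | 0 ≤ g s} :=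
    closure_minimal (inter_subset_inter_right _ fun s hs => le_of_lt hs)
      (isClosed_Icc.inter (isClosed_le continuous_const hg)) (csInf_mem_closure hS hSbdd)
  replace hat : a < sInf S := lt_of_le_of_ne hat fun h => by rw [← h] at hgt; linarith
  have hleft : ∀ s ∈ Icc a (sInf S), g s ≤ 0 := by
    rw [← closure_Ico hat.ne]
    refine closure_minimal (fun s hs => ?_) (isClosed_le hg continuous_const)
    by_contra hpos
    exact notMem_of_lt_csInf hs.2 hSbdd
      ⟨⟨hs.1, hs.2.le.trans htb⟩, show 0 < g s from lt_of_not_ge hpos⟩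
  have hzero : g (sInf S) = 0 := le_antisymm (hleft _ ⟨hat.le, le_rfl⟩) hgt
  replace htb : sInf S < b := lt_of_le_of_ne htb fun h => by rw [h] at hzero; linarith
  refine ⟨sInf S, ⟨hat, htb⟩, hzero, hleft, ?_⟩
  have hSt : S ⊆ Ioi (sInf S) := fun s hs =>
    lt_of_le_of_ne (csInf_le hSbdd hs) fun h => (hs.2 : 0 < g s).ne' (h ▸ hzero)
  rw [frequently_nhdsWithin_iff]
  exact (mem_closure_iff_frequently.1 (csInf_mem_closure hS hSbdd)).mono
    fun s hs => ⟨hs.2, hSt hs⟩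

/-- By the isolated zeros principle `g` is either locally zero at `t` or has no zeros on some
`(t, u)`, where it then keeps one sign. -/
theorem AnalyticAt.eventually_nonneg_of_frequently_pos {g : ℝ → ℝ} {t : ℝ}
    (hg : AnalyticAt ℝ g t) (hpos : ∃ᶠ s in 𝓝[>] t, 0 < g s) : ∀ᶠ s in 𝓝[>] t, 0 ≤ g s := by
  rcases hg.eventually_eq_zero_or_eventually_ne_zero with hzero | hne
  · exact (eventually_nhdsWithin_of_eventually_nhds hzero).mono fun s hs => hs.ge
  have hnear : ∀ᶠ s in 𝓝[>] t, g s ≠ 0 ∧ ContinuousAt g s :=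
    (hne.filter_mono (nhdsWithin_mono t fun s hs => ne_of_gt hs)).and
      (eventually_nhdsWithin_of_eventually_nhds
        (hg.eventually_analyticAt.mono fun s hs => hs.continuousAt))
  obtain ⟨u, htu, hsub⟩ := mem_nhdsGT_iff_exists_Ioo_subset.1 hnear
  obtain ⟨s₀, hs₀, hs₀I⟩ := (hpos.and_eventually (Ioo_mem_nhdsGT htu)).exists
  filter_upwards [Ioo_mem_nhdsGT htu] with s hs
  by_contra! hneg
  have hcont : ContinuousOn g (Ioo t u) := fun x hx => (hsub hx).2.continuousWithinAt
  obtain ⟨c, hc, hgc⟩ := isPreconnected_Ioo.intermediate_value hs hs₀I hcont ⟨hneg.le, hs₀.le⟩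
  exact (hsub hc).1 hgc

theorem exists_upcrossesAt_mem_Ioo {g : ℝ → ℝ} (hg : ∀ x, AnalyticAt ℝ g x) {a b : ℝ}
    (hab : a < b) (ha : g a < 0) (hb : 0 < g b) : ∃ t ∈ Ioo a b, UpcrossesAt g t := by
  obtain ⟨t, ht, hzero, hleft, hpos⟩ := exists_mem_Ioo_forall_nonpos_frequently_pos
    (continuous_iff_continuousAt.2 fun x => (hg x).continuousAt) hab ha hb
  obtain ⟨u, htu, hsub⟩ :=
    mem_nhdsGT_iff_exists_Ioc_subset.1 ((hg t).eventually_nonneg_of_frequently_pos hpos)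
  have htu' : 0 < u - t := sub_pos.2 htu
  refine ⟨t, ht, hzero, min (u - t) (t - a), lt_min htu' (sub_pos.2 ht.1), fun s hs => ?_,
    fun s hs => ?_⟩
  · exact hleft s ⟨by linarith [hs.1, min_le_right (u - t) (t - a)], hs.2⟩
  · rcases hs.1.eq_or_lt with rfl | hts
    · exact hzero.ge
    · exact hsub ⟨hts, by linarith [hs.2, min_le_left (u - t) (t - a)]⟩

theorem Complex.abs_re_sub_lt_of_norm_sub_lt {w : ℂ} {A x ε : ℝ}
    (h : ‖w - A * Complex.exp (x * Complex.I)‖ < ε) : |w.re - A * Real.cos x| < ε := by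
  refine lt_of_le_of_lt (le_of_eq_of_le ?_ (Complex.abs_re_le_norm _)) h
  simp [Complex.exp_ofReal_mul_I_re]

theorem Complex.abs_im_sub_lt_of_norm_sub_lt {w : ℂ} {A x ε : ℝ}
    (h : ‖w - A * Complex.exp (x * Complex.I)‖ < ε) : |w.im - A * Real.sin x| < ε := by
  refine lt_of_le_of_lt (le_of_eq_of_le ?_ (Complex.abs_im_le_norm _)) h
  simp [Complex.exp_ofReal_mul_I_im]

theorem exists_strictMono_mem_Ico_of_periodic {α : Type*} [AddCommGroup α] [LinearOrder α]
    [IsOrderedAddMonoid α] [Archimedean α] {N : ℕ} {p : α} (hp : 0 < p) {P : α → Prop}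
    (hP : ∀ (n : ℤ) t, P t → P (t - n • p)) (u : Fin N → α) (hu : ∀ j, P (u j))
    (hinj : ∀ i j (n : ℤ), u j - u i = n • p → i = j) :
    ∃ t : Fin N → α, StrictMono t ∧ ∀ j, t j ∈ Ico 0 p ∧ P (t j) := by
  set v : Fin N → α := fun j => toIcoMod hp 0 (u j)
  have hv : Function.Injective v := fun i j h => hinj i j _
    ((toIcoMod_eq_toIcoMod hp).1 h).choose_spec
  refine ⟨v ∘ Tuple.sort v,
    (Tuple.monotone_sort v).strictMono_of_injective (hv.comp (Tuple.sort v).injective),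
    fun j => ⟨by simpa using toIcoMod_mem_Ico hp 0 _, ?_⟩⟩
  simp only [Function.comp_apply, v, ← self_sub_toIcoDiv_zsmul]
  exact hP _ _ (hu _)

theorem eq_of_sub_eq_zsmul_two_pi {N : ℕ} {φ : ℝ} {u : Fin N → ℝ}
    (hu : ∀ j : Fin N, |N * u j + φ - (j : ℕ) * (2 * π)| < π / 6) (i j : Fin N) (n : ℤ)
    (h : u j - u i = n • (2 * π)) : i = j := by
  have hm : (((N * n - (j - i) : ℤ)) : ℝ) * (2 * π)
      = (N * u j + φ - (j : ℕ) * (2 * π)) - (N * u i + φ - (i : ℕ) * (2 * π)) := by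
    rw [zsmul_eq_mul] at h
    push_cast
    linear_combination (-(N : ℝ)) * h
  have hm0 : (N * n - (j - i) : ℤ) = 0 := by
    obtain ⟨hj₁, hj₂⟩ := abs_lt.1 (hu j)
    obtain ⟨hi₁, hi₂⟩ := abs_lt.1 (hu i)
    have : |(((N * n - (j - i) : ℤ)) : ℝ)| < 1 :=
      abs_lt.2 ⟨by nlinarith [pi_pos], by nlinarith [pi_pos]⟩
    exact Int.abs_lt_one_iff.1 (by exact_mod_cast this)
  have hji : (j : ℤ) - i = 0 :=
    Int.eq_zero_of_abs_lt_dvd (m := N) ⟨n, by linear_combination -hm0⟩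
      (abs_sub_lt_iff.2 ⟨by omega, by omega⟩)
  exact Fin.ext (by omega)

theorem exists_upcrossesAt_near_phase {F : ℝ → ℂ} (hF : ∀ x, AnalyticAt ℝ (fun s => (F s).im) x)
    {N : ℕ} (hN : 0 < N) {A φ : ℝ}
    (hclose : ∀ s, ‖F s - A * Complex.exp ((N * s + φ : ℝ) * Complex.I)‖ < A / 2) (k : ℤ) :
    ∃ u, |N * u + φ - k * (2 * π)| < π / 6 ∧ UpcrossesAt (fun s => (F s).im) u ∧
      0 < (F u).re := by
  have hN' : (0 : ℝ) < N := by exact_mod_cast hN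
  have hA : 0 < A := by linarith [(norm_nonneg _).trans_lt (hclose 0)]
  set a := (k * (2 * π) - π / 6 - φ) / N
  set b := (k * (2 * π) + π / 6 - φ) / N
  have hNa : N * a + φ = -(π / 6) + k * (2 * π) := by simp only [a]; field_simp; ring
  have hNb : N * b + φ = π / 6 + k * (2 * π) := by simp only [b]; field_simp; ring
  have ha : (F a).im < 0 := by
    have := abs_lt.1 (Complex.abs_im_sub_lt_of_norm_sub_lt (hclose a))
    rw [hNa, sin_add_int_mul_two_pi, sin_neg, sin_pi_div_six] at this
    linarith
  have hb : 0 < (F b).im := by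
    have := abs_lt.1 (Complex.abs_im_sub_lt_of_norm_sub_lt (hclose b))
    rw [hNb, sin_add_int_mul_two_pi, sin_pi_div_six] at this
    linarith
  have hab : a < b := by
    simp only [a, b]; gcongr; linarith [pi_pos]
  obtain ⟨u, ⟨hau, hub⟩, hup⟩ := exists_upcrossesAt_mem_Ioo hF hab ha hb
  have hphase : |N * u + φ - k * (2 * π)| < π / 6 := by
    have h1 := mul_lt_mul_of_pos_left hau hN'
    have h2 := mul_lt_mul_of_pos_left hub hN'
    exact abs_lt.2 ⟨by linarith, by linarith⟩
  have hcos : 1 / 2 ≤ Real.cos (N * u + φ) := by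
    rw [← sub_add_cancel (N * u + φ) (k * (2 * π)), cos_add_int_mul_two_pi, ← cos_abs,
      ← cos_pi_div_three]
    exact cos_le_cos_of_nonneg_of_le_pi (abs_nonneg _) (by linarith [pi_pos])
      (by linarith [pi_pos])
  refine ⟨u, hphase, hup, ?_⟩
  have := abs_lt.1 (Complex.abs_re_sub_lt_of_norm_sub_lt (hclose u))
  nlinarith

theorem Complex.mul_pow_eq_polar (c : ℂ) (N : ℕ) (r t : ℝ) :
    c * (r * Complex.exp (Complex.I * t)) ^ N =
      ((‖c‖ * r ^ N : ℝ) : ℂ) * Complex.exp ((N * t + Complex.arg c : ℝ) * Complex.I) := by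
  conv_lhs => rw [← Complex.norm_mul_exp_arg_mul_I c]
  rw [mul_pow, ← Complex.exp_nat_mul]
  push_cast
  rw [show ((N : ℂ) * t + c.arg) * Complex.I = c.arg * Complex.I + N * (Complex.I * t) by ring,
    Complex.exp_add]
  ring

namespace Polynomial

/-- The paper's `f_r`. -/
noncomputable def evalCircle (f : ℂ[X]) (r t : ℝ) : ℂ :=
  f.eval (r * Complex.exp (Complex.I * t))

theorem evalCircle_periodic (f : ℂ[X]) (r : ℝ) : Function.Periodic (f.evalCircle r) (2 * π) := by
  intro t
  simp only [evalCircle]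
  push_cast
  rw [mul_add, Complex.exp_add, mul_comm Complex.I (2 * π), Complex.exp_two_pi_mul_I, mul_one]

theorem analyticAt_im_evalCircle (f : ℂ[X]) (r x : ℝ) :
    AnalyticAt ℝ (fun t => (f.evalCircle r t).im) x := by
  have hexp : AnalyticAt ℝ (fun t : ℝ => Complex.exp (Complex.I * t)) x :=
    analyticAt_cexp.restrictScalars.comp (analyticAt_const.mul (Complex.ofRealCLM.analyticAt x))
  have heval := ((analyticAt_const (v := (r : ℂ))).mul hexp).aeval_polynomial f
  simp only [coe_aeval_eq_eval] at heval
  exact (Complex.imCLM.analyticAt _).comp heval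

theorem eventually_norm_evalCircle_sub_lt {f : ℂ[X]} (hf : f ≠ 0) :
    ∀ᶠ r in atTop, ∀ t, ‖f.evalCircle r t - ((‖f.leadingCoeff‖ * r ^ f.natDegree : ℝ) : ℂ) *
      Complex.exp ((f.natDegree * t + f.leadingCoeff.arg : ℝ) * Complex.I)‖ <
        ‖f.leadingCoeff‖ * r ^ f.natDegree / 2 := by
  have hlead : ∀ᶠ z in Bornology.cobounded ℂ, ‖f.eval z - f.leadingCoeff * z ^ f.natDegree‖ ≤
      1 / 4 * ‖f.leadingCoeff * z ^ f.natDegree‖ :=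
    isEquivalent_cobounded_leading_monomial.isLittleO.def (by norm_num)
  rw [← comap_norm_atTop, eventually_comap] at hlead
  filter_upwards [hlead, eventually_gt_atTop 0] with r hr hr0 t
  have hz : ‖(r : ℂ) * Complex.exp (Complex.I * t)‖ = r := by
    rw [norm_mul, mul_comm Complex.I, Complex.norm_exp_ofReal_mul_I, mul_one,
      Complex.norm_of_nonneg hr0.le]
  have hnorm : ‖f.leadingCoeff * ((r : ℂ) * Complex.exp (Complex.I * t)) ^ f.natDegree‖ =
      ‖f.leadingCoeff‖ * r ^ f.natDegree := by
    rw [norm_mul, norm_pow, hz]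
  have hpos : 0 < ‖f.leadingCoeff‖ * r ^ f.natDegree := by
    have := leadingCoeff_ne_zero.2 hf
    positivity
  rw [evalCircle, ← Complex.mul_pow_eq_polar]
  linarith [hnorm ▸ hr _ hz]

theorem isUpcrossing_neg_iff {f : ℂ[X]} {r t : ℝ} :
    IsUpcrossing (-f) r t ↔ IsDowncrossing f r t := by
  simp only [IsUpcrossing, IsDowncrossing, eval_neg, Complex.neg_im, neg_eq_zero, neg_nonpos,
    ge_iff_le, neg_nonneg]

theorem eventually_exists_upcrossings {f : ℂ[X]} {N : ℕ} (hdeg : f.natDegree = N) (hN : 0 < N) :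
    ∀ᶠ r in atTop, ∃ t : Fin N → ℝ, StrictMono t ∧ ∀ j, t j ∈ Ico 0 (2 * π) ∧
      IsUpcrossing f r (t j) ∧ 0 < (f.eval ((r : ℂ) * Complex.exp (Complex.I * t j))).re := by
  have hf : f ≠ 0 := by rintro rfl; simp at hdeg; omega
  filter_upwards [eventually_norm_evalCircle_sub_lt hf] with r hr
  rw [hdeg] at hr
  choose u hu using fun j : Fin N => exists_upcrossesAt_near_phase
    (f.analyticAt_im_evalCircle r) hN hr (j : ℕ)
  push_cast at hu
  refine exists_strictMono_mem_Ico_of_periodic two_pi_pos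
    (P := fun t => IsUpcrossing f r t ∧ 0 < (f.evalCircle r t).re) (fun n t ht => ?_)
    u (fun j => (hu j).2) (eq_of_sub_eq_zsmul_two_pi fun j => (hu j).1)
  have hper := (f.evalCircle_periodic r).zsmul n
  exact ⟨UpcrossesAt.sub_period (hper.comp Complex.im) ht.1, (hper.sub_eq t).symm ▸ ht.2⟩

end Polynomial

theorem large_radius_crossings (f : Polynomial ℂ) (N : ℕ) (hN : 1 ≤ N)
    (hdeg : f.natDegree = N) :
    ∃ R : ℝ, 0 < R ∧ ∀ r : ℝ, R < r →
      (∃ t : Fin N → ℝ, StrictMono t ∧ ∀ j : Fin N, t j ∈ Set.Ico (0 : ℝ) (2 * π) ∧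
        IsUpcrossing f r (t j) ∧
        0 < (f.eval ((r : ℂ) * Complex.exp (Complex.I * t j))).re) ∧
      (∃ t' : Fin N → ℝ, StrictMono t' ∧ ∀ j : Fin N, t' j ∈ Set.Ico (0 : ℝ) (2 * π) ∧
        IsDowncrossing f r (t' j) ∧
        (f.eval ((r : ℂ) * Complex.exp (Complex.I * t' j))).re < 0) := by
  obtain ⟨R, hR⟩ := eventually_atTop.1 <|
    (Polynomial.eventually_exists_upcrossings hdeg hN).and
      (Polynomial.eventually_exists_upcrossings ((Polynomial.natDegree_neg f).trans hdeg) hN)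
  refine ⟨max R 1, by positivity, fun r hr => ?_⟩
  obtain ⟨hup, t', ht'mono, ht'⟩ := hR r (le_of_max_le_left hr.le)
  refine ⟨hup, t', ht'mono, fun j => ?_⟩
  obtain ⟨hmem, hdown, hre⟩ := ht' j
  simp only [Polynomial.eval_neg, Complex.neg_re, neg_pos] at hre
  exact ⟨hmem, Polynomial.isUpcrossing_neg_iff.1 hdown, hre⟩
end

section
/- Let f be a polynomial with complex coefficients, r₀ > 0, and t₀ ∈ ℝ with Im f(r₀·exp(i t₀)) = 0. Suppose Im α₀ > 0, where α₀ = i·r₀·exp(i t₀)·f′(r₀·exp(i t₀)). Then there exist ε > 0 and a differentiable function φ : (r₀ − ε, r₀ + ε) → ℝ with φ(r₀) = t₀ such that Im f(s·exp(i φ(s))) = 0 for all s ∈ (r₀ − ε, r₀ + ε), and the real-valued function g(s) = Re f(s·exp(i φ(s))) is strictly increasing on (r₀ − ε, r₀ + ε). (An upcrossing point of the curve f_r moves continuously to the right along the real axis as r increases.) -/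
/-!
By the implicit function theorem applied to `(s, t) ↦ Im f(s e^{it})`, whose `t`-derivative at
`(r₀, t₀)` is `Im α₀ ≠ 0`, the zero `t₀` continues to a differentiable branch `φ`. Along it,
`s ↦ f(s e^{iφ(s)})` is real with derivative `(1 + i s φ'(s)) w(s)`, `w(s) = e^{iφ(s)} f'(s e^{iφ(s)})`;
a real number of this form equals `(1 + (s φ')²) Re w(s)`, and `r₀ Re w(r₀) = Im α₀ > 0`.
-/

open Complex Filter Set Topology

theorem ContinuousLinearMap.isInvertible_of_apply_one_ne_zero {𝕜 : Type*}
    [NontriviallyNormedField 𝕜] (L : 𝕜 →L[𝕜] 𝕜) (h : L 1 ≠ 0) : L.IsInvertible :=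
  ⟨ContinuousLinearEquiv.unitsEquivAut 𝕜 (Units.mk0 _ h), by ext; simp⟩

theorem HasDerivAt.complex_re {g : ℝ → ℂ} {μ : ℂ} {s : ℝ} (hg : HasDerivAt g μ s) :
    HasDerivAt (fun x => (g x).re) μ.re s :=
  reCLM.hasFDerivAt.comp_hasDerivAt s hg

theorem HasDerivAt.complex_im {g : ℝ → ℂ} {μ : ℂ} {s : ℝ} (hg : HasDerivAt g μ s) :
    HasDerivAt (fun x => (g x).im) μ.im s :=
  imCLM.hasFDerivAt.comp_hasDerivAt s hg

theorem HasDerivAt.im_eq_zero_of_eventually_im_eq_zero {g : ℝ → ℂ} {μ : ℂ} {s : ℝ}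
    (hg : HasDerivAt g μ s) (h : ∀ᶠ x in 𝓝 s, (g x).im = 0) : μ.im = 0 :=
  (hg.complex_im.congr_of_eventuallyEq
    (h.mono fun _ hx => hx.symm)).unique (hasDerivAt_const s 0)

theorem HasDerivAt.comp_ofReal_mul_exp {f : ℂ → ℂ} {f' : ℂ} {ρ θ : ℝ → ℝ} {ρ' θ' s : ℝ}
    (hf : HasDerivAt f f' ((ρ s : ℂ) * cexp (I * θ s))) (hρ : HasDerivAt ρ ρ' s)
    (hθ : HasDerivAt θ θ' s) :
    HasDerivAt (fun s => f ((ρ s : ℂ) * cexp (I * θ s)))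
      ((ρ' + I * ρ s * θ') * cexp (I * θ s) * f') s :=
  (hf.comp s (hρ.ofReal_comp.mul (hθ.ofReal_comp.const_mul I).cexp)).congr_deriv (by ring)

theorem Complex.re_one_add_I_mul_pos_of_im_eq_zero {w : ℂ} {x : ℝ} (hw : 0 < w.re)
    (h : ((1 + I * x) * w).im = 0) : 0 < ((1 + I * x) * w).re := by
  simp only [mul_re, mul_im, add_re, add_im, one_re, one_im, I_re, I_im, ofReal_re, ofReal_im]
    at h ⊢
  have hw_im : w.im = -(x * w.re) := by linarith
  rw [hw_im]
  nlinarith [mul_nonneg hw.le (sq_nonneg x)]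

section

variable {f : ℂ → ℂ}

theorem exists_differentiable_angle_im_eq_zero (hf : Differentiable ℂ f) {r₀ t₀ : ℝ}
    (ht₀ : (f (r₀ * cexp (I * t₀))).im = 0)
    (hα : (I * r₀ * cexp (I * t₀) * deriv f (r₀ * cexp (I * t₀))).im ≠ 0) :
    ∃ φ : ℝ → ℝ, φ r₀ = t₀ ∧
      ∀ᶠ s in 𝓝 r₀, DifferentiableAt ℝ φ s ∧ (f (s * cexp (I * φ s))).im = 0 := by
  set F : ℝ × ℝ → ℝ := fun p => (f (p.1 * cexp (I * p.2))).im
  have hF : ContDiff ℝ 1 F :=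
    imCLM.contDiff.comp (((hf.contDiff (n := 1)).restrict_scalars ℝ).comp
      ((ofRealCLM.contDiff.comp contDiff_fst).mul
        (contDiff_exp.comp (contDiff_const.mul (ofRealCLM.contDiff.comp contDiff_snd)))))
  have hpartial : (fderiv ℝ F (r₀, t₀) ∘L .inr ℝ ℝ ℝ) 1 =
      (I * r₀ * cexp (I * t₀) * deriv f (r₀ * cexp (I * t₀))).im := by
    have h₁ := ((hF.differentiable one_ne_zero _).hasFDerivAt.comp t₀
      (hasFDerivAt_prodMk_right r₀ t₀)).hasDerivAt
    have h₂ : HasDerivAt (fun t => F (r₀, t))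
        (I * r₀ * cexp (I * t₀) * deriv f (r₀ * cexp (I * t₀))).im t₀ := by
      simpa using (HasDerivAt.comp_ofReal_mul_exp (hf _).hasDerivAt
        (hasDerivAt_const t₀ r₀) (hasDerivAt_id t₀)).complex_im
    exact h₁.unique h₂
  set cdf := hF.contDiffAt (x := (r₀, t₀))
  have hinv := ContinuousLinearMap.isInvertible_of_apply_one_ne_zero _ (hpartial ▸ hα)
  refine ⟨cdf.implicitFunction one_ne_zero hinv, cdf.implicitFunction_apply_self _ hinv, ?_⟩
  filter_upwards [(cdf.contDiffAt_implicitFunction one_ne_zero hinv).eventually (by simp),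
    cdf.eventually_apply_implicitFunction one_ne_zero hinv] with s hd hs
  exact ⟨hd.differentiableAt one_ne_zero, hs.trans ht₀⟩

theorem strictMonoOn_re_of_im_eq_zero (hf : Differentiable ℂ f) {φ : ℝ → ℝ} {U : Set ℝ}
    (hU : IsOpen U) (hUc : Convex ℝ U) (hφ : DifferentiableOn ℝ φ U)
    (him : ∀ s ∈ U, (f (s * cexp (I * φ s))).im = 0)
    (hpos : ∀ s ∈ U, 0 < (cexp (I * φ s) * deriv f (s * cexp (I * φ s))).re) :
    StrictMonoOn (fun s : ℝ => (f (s * cexp (I * φ s))).re) U := by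
  have hderiv : ∀ s ∈ U, HasDerivAt (fun s : ℝ => f (s * cexp (I * φ s)))
      ((1 + I * (s * deriv φ s : ℝ)) * (cexp (I * φ s) * deriv f (s * cexp (I * φ s)))) s := by
    intro s hs
    refine (HasDerivAt.comp_ofReal_mul_exp (hf _).hasDerivAt (hasDerivAt_id s)
      (hφ.differentiableAt (hU.mem_nhds hs)).hasDerivAt).congr_deriv ?_
    push_cast [id]
    ring
  refine strictMonoOn_of_deriv_pos hUc
    (fun s hs => (hderiv s hs).complex_re.continuousAt.continuousWithinAt) fun s hs => ?_
  rw [hU.interior_eq] at hs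
  rw [(hderiv s hs).complex_re.deriv]
  refine Complex.re_one_add_I_mul_pos_of_im_eq_zero (hpos s hs)
    ((hderiv s hs).im_eq_zero_of_eventually_im_eq_zero ?_)
  filter_upwards [hU.mem_nhds hs] using him

theorem eventually_re_exp_mul_deriv_pos (hf : Differentiable ℂ f) {φ : ℝ → ℝ} {r₀ : ℝ} (hr₀ : 0 < r₀)
    (hφ : ContinuousAt φ r₀)
    (hα : 0 < (I * r₀ * cexp (I * φ r₀) * deriv f (r₀ * cexp (I * φ r₀))).im) :
    ∀ᶠ s in 𝓝 r₀, 0 < (cexp (I * φ s) * deriv f (s * cexp (I * φ s))).re := by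
  have hcont : Continuous (deriv f) := (hf.contDiff (n := 1)).continuous_deriv le_rfl
  have hw : ContinuousAt
      (fun s : ℝ => (cexp (I * φ s) * deriv f (s * cexp (I * φ s))).re) r₀ := by
    fun_prop
  refine hw.eventually (lt_mem_nhds ?_)
  have : (I * r₀ * cexp (I * φ r₀) * deriv f (r₀ * cexp (I * φ r₀))).im
      = r₀ * (cexp (I * φ r₀) * deriv f (r₀ * cexp (I * φ r₀))).re := by
    rw [mul_assoc, mul_assoc, I_mul_im, re_ofReal_mul]
  exact pos_of_mul_pos_right (this ▸ hα) hr₀.le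

end

theorem upcrossing_moves_right (f : Polynomial ℂ) (r₀ : ℝ) (hr₀ : 0 < r₀) (t₀ : ℝ)
    (ht₀ : (f.eval ((r₀ : ℂ) * Complex.exp (Complex.I * t₀))).im = 0)
    (α₀ : ℂ)
    (hα₀ : α₀ = Complex.I * r₀ * Complex.exp (Complex.I * t₀) *
        f.derivative.eval ((r₀ : ℂ) * Complex.exp (Complex.I * t₀)))
    (him : 0 < α₀.im) :
    ∃ ε > (0 : ℝ), ∃ φ : ℝ → ℝ, φ r₀ = t₀ ∧
      DifferentiableOn ℝ φ (Set.Ioo (r₀ - ε) (r₀ + ε)) ∧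
      (∀ s ∈ Set.Ioo (r₀ - ε) (r₀ + ε),
        (f.eval ((s : ℂ) * Complex.exp (Complex.I * φ s))).im = 0) ∧
      StrictMonoOn (fun s : ℝ => (f.eval ((s : ℂ) * Complex.exp (Complex.I * φ s))).re)
        (Set.Ioo (r₀ - ε) (r₀ + ε)) := by
  have hf : Differentiable ℂ (fun z => f.eval z) := f.differentiable
  have hderiv (z : ℂ) : deriv (fun z => f.eval z) z = f.derivative.eval z := f.deriv
  rw [hα₀, ← hderiv] at him
  obtain ⟨φ, hφ₀, hφ⟩ := exists_differentiable_angle_im_eq_zero hf ht₀ him.ne'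
  have hpos := eventually_re_exp_mul_deriv_pos hf hr₀ hφ.self_of_nhds.1.continuousAt (hφ₀ ▸ him)
  obtain ⟨ε, hε, hball⟩ := (nhds_basis_Ioo_pos r₀).eventually_iff.1 (hφ.and hpos)
  have hφdiff : DifferentiableOn ℝ φ (Ioo (r₀ - ε) (r₀ + ε)) :=
    fun s hs => (hball hs).1.1.differentiableWithinAt
  refine ⟨ε, hε, φ, hφ₀, hφdiff, fun s hs => (hball hs).1.2, ?_⟩
  exact strictMonoOn_re_of_im_eq_zero hf isOpen_Ioo (convex_Ioo _ _) hφdiff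
    (fun s hs => (hball hs).1.2) fun s hs => (hball hs).2
end

section
/- Let f be a polynomial with complex coefficients, r₀ > 0, and t₀ ∈ ℝ with Im f(r₀·exp(i t₀)) = 0. Suppose Im α₀ < 0, where α₀ = i·r₀·exp(i t₀)·f′(r₀·exp(i t₀)). Then there exist ε > 0 and a differentiable function φ : (r₀ − ε, r₀ + ε) → ℝ with φ(r₀) = t₀ such that Im f(s·exp(i φ(s))) = 0 for all s ∈ (r₀ − ε, r₀ + ε), and the real-valued function g(s) = Re f(s·exp(i φ(s))) is strictly decreasing on (r₀ − ε, r₀ + ε). (A downcrossing point of the curve f_r moves continuously to the left along the real axis as r increases.) -/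
/-!
Write `F(s, t) = f(s e^{it})`. Since `∂ₜ F = i s e^{it} f'(s e^{it}) = α`, the hypothesis
`Im α₀ ≠ 0` lets the implicit function theorem solve `Im F(s, φ s) = 0` near `r₀` with `φ`
differentiable. Along that curve, with `w = e^{iφ} f'(s e^{iφ})` and `k = s φ'`, the derivative of
`s ↦ F(s, φ s)` is `w (1 + k i)`. Its imaginary part vanishes, so `Im w = -k Re w` and its real part
is `(1 + k²) Re w`. This is negative because `Im α = s Re w` stays negative near `r₀`.
-/

open Complex Filter Topology

section ImplicitFunction

variable {𝕜 : Type*} [RCLike 𝕜] {E : Type*} [NormedAddCommGroup E] [NormedSpace 𝕜 E]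
  [CompleteSpace E]

theorem ContinuousLinearMap.isInvertible_of_apply_one_ne_zero_s12 {L : 𝕜 →L[𝕜] 𝕜} (hL : L 1 ≠ 0) :
    L.IsInvertible :=
  ⟨ContinuousLinearEquiv.unitsEquivAut 𝕜 (.mk0 _ hL), by ext; simp⟩

theorem ContDiffAt.exists_eventually_differentiableAt_apply_eq {F : E × 𝕜 → 𝕜} {x₀ : E} {y₀ : 𝕜}
    (hF : ContDiffAt 𝕜 1 F (x₀, y₀)) {c : 𝕜} (hc : HasDerivAt (fun y => F (x₀, y)) c y₀)
    (hc₀ : c ≠ 0) :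
    ∃ φ : E → 𝕜, φ x₀ = y₀ ∧
      ∀ᶠ x in 𝓝 x₀, DifferentiableAt 𝕜 φ x ∧ F (x, φ x) = F (x₀, y₀) := by
  have hpartial : (fderiv 𝕜 F (x₀, y₀) ∘L .inr 𝕜 E 𝕜) 1 = c := by
    have := (hF.differentiableAt one_ne_zero).hasFDerivAt.comp_hasDerivAt y₀
      ((hasDerivAt_const y₀ x₀).prodMk (hasDerivAt_id y₀))
    simpa using this.unique hc
  have hinv := ContinuousLinearMap.isInvertible_of_apply_one_ne_zero_s12 (hpartial ▸ hc₀)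
  refine ⟨hF.implicitFunction one_ne_zero hinv, hF.implicitFunction_apply_self _ _, ?_⟩
  filter_upwards [(hF.contDiffAt_implicitFunction one_ne_zero hinv).eventually (by simp),
    hF.eventually_apply_implicitFunction one_ne_zero hinv] with x hd hx
  exact ⟨hd.differentiableAt one_ne_zero, hx⟩

end ImplicitFunction

theorem HasDerivAt.complex_re_s12 {h : ℝ → ℂ} {D : ℂ} {s : ℝ} (hh : HasDerivAt h D s) :
    HasDerivAt (fun x => (h x).re) D.re s :=
  reCLM.hasFDerivAt.comp_hasDerivAt s hh

theorem HasDerivAt.complex_im_s12 {h : ℝ → ℂ} {D : ℂ} {s : ℝ} (hh : HasDerivAt h D s) :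
    HasDerivAt (fun x => (h x).im) D.im s :=
  imCLM.hasFDerivAt.comp_hasDerivAt s hh

theorem HasDerivAt.im_eq_zero_of_eventually {h : ℝ → ℂ} {D : ℂ} {s : ℝ} (hh : HasDerivAt h D s)
    (h₀ : ∀ᶠ x in 𝓝 s, (h x).im = 0) : D.im = 0 :=
  hh.complex_im_s12.unique ((hasDerivAt_const s 0).congr_of_eventuallyEq h₀)

theorem Complex.re_mul_one_add_mul_I_neg {w : ℂ} {k : ℝ} (hw : w.re < 0)
    (h : (w * (1 + k * I)).im = 0) : (w * (1 + k * I)).re < 0 := by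
  simp only [mul_im, mul_re, add_re, add_im, one_re, one_im, I_re, I_im, ofReal_re,
    ofReal_im, mul_zero, mul_one, add_zero, zero_add, sub_zero] at h ⊢
  have him : w.im = -(k * w.re) := by linarith
  rw [him]
  nlinarith [mul_nonneg (sq_nonneg k) (neg_nonneg.2 hw.le)]

section PolarCurves

variable {f : ℂ → ℂ}

theorem hasDerivAt_comp_ofReal_mul_cexp_I_mul {r t : ℝ}
    (hf : DifferentiableAt ℂ f (r * cexp (I * t))) :
    HasDerivAt (fun θ : ℝ => f (r * cexp (I * θ)))
      (I * r * cexp (I * t) * deriv f (r * cexp (I * t))) t := by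
  have hcircle : HasDerivAt (fun θ : ℝ => (r : ℂ) * cexp (I * θ)) (I * r * cexp (I * t)) t :=
    ((((hasDerivAt_id (t : ℂ)).const_mul I).cexp.const_mul (r : ℂ)).comp_ofReal).congr_deriv
      (by simp only [id_eq, mul_one]; ring)
  exact (hf.hasDerivAt.comp t hcircle).congr_deriv (mul_comm _ _)

theorem HasDerivAt.comp_ofReal_mul_cexp_I_mul {φ : ℝ → ℝ} {c s : ℝ} (hφ : HasDerivAt φ c s)
    (hf : DifferentiableAt ℂ f (s * cexp (I * φ s))) :
    HasDerivAt (fun x : ℝ => f (x * cexp (I * φ x)))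
      (_root_.deriv f (s * cexp (I * φ s)) * cexp (I * φ s) * (1 + (s * c : ℝ) * I)) s := by
  have hcurve : HasDerivAt (fun x : ℝ => (x : ℂ) * cexp (I * φ x))
      (cexp (I * φ s) * (1 + (s * c : ℝ) * I)) s :=
    ((hasDerivAt_id s).ofReal_comp.mul (hφ.ofReal_comp.const_mul I).cexp).congr_deriv
      (by simp only [ofReal_one, one_mul, id_eq, ofReal_mul]; ring)
  exact (hf.hasDerivAt.comp s hcurve).congr_deriv (mul_assoc _ _ _).symm

theorem deriv_re_comp_ofReal_mul_cexp_I_mul_neg {φ : ℝ → ℝ} {s : ℝ} (hs : 0 < s)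
    (hφ : DifferentiableAt ℝ φ s) (hf : DifferentiableAt ℂ f (s * cexp (I * φ s)))
    (him : ∀ᶠ x in 𝓝 s, (f (x * cexp (I * φ x))).im = 0)
    (hα : (I * s * cexp (I * φ s) * deriv f (s * cexp (I * φ s))).im < 0) :
    deriv (fun x : ℝ => (f (x * cexp (I * φ x))).re) s < 0 := by
  have hD := hφ.hasDerivAt.comp_ofReal_mul_cexp_I_mul hf
  rw [hD.complex_re_s12.deriv]
  refine re_mul_one_add_mul_I_neg ?_ (hD.im_eq_zero_of_eventually him)
  have hα_eq : (I * s * cexp (I * φ s) * deriv f (s * cexp (I * φ s))).im =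
      s * (deriv f (s * cexp (I * φ s)) * cexp (I * φ s)).re := by
    simp only [mul_im, mul_re, I_re, I_im, ofReal_re, ofReal_im]; ring
  rw [hα_eq] at hα
  exact neg_of_mul_neg_right hα hs.le

theorem exists_strictAntiOn_re_comp_ofReal_mul_cexp_I_mul (hf : Differentiable ℂ f)
    {r₀ t₀ : ℝ} (hr₀ : 0 < r₀) (ht₀ : (f ((r₀ : ℂ) * cexp (I * t₀))).im = 0)
    (hα₀ : (I * r₀ * cexp (I * t₀) * deriv f ((r₀ : ℂ) * cexp (I * t₀))).im < 0) :
    ∃ ε > (0 : ℝ), ∃ φ : ℝ → ℝ, φ r₀ = t₀ ∧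
      DifferentiableOn ℝ φ (Set.Ioo (r₀ - ε) (r₀ + ε)) ∧
      (∀ s ∈ Set.Ioo (r₀ - ε) (r₀ + ε), (f ((s : ℂ) * cexp (I * φ s))).im = 0) ∧
      StrictAntiOn (fun s : ℝ => (f ((s : ℂ) * cexp (I * φ s))).re)
        (Set.Ioo (r₀ - ε) (r₀ + ε)) := by
  have hF : ContDiff ℝ 1 (fun p : ℝ × ℝ => (f ((p.1 : ℂ) * cexp (I * p.2))).im) := by
    have hfℝ := (hf.contDiff (n := 1)).restrict_scalars ℝ
    have hofReal : ContDiff ℝ 1 ((↑) : ℝ → ℂ) := ofRealCLM.contDiff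
    exact imCLM.contDiff.comp (by fun_prop)
  obtain ⟨φ, hφ₀, hφ⟩ := hF.contDiffAt.exists_eventually_differentiableAt_apply_eq
    (hasDerivAt_comp_ofReal_mul_cexp_I_mul (hf _)).complex_im_s12 hα₀.ne
  have hα : ∀ᶠ s : ℝ in 𝓝 r₀,
      (I * s * cexp (I * φ s) * deriv f ((s : ℂ) * cexp (I * φ s))).im < 0 := by
    have hφc : ContinuousAt φ r₀ := hφ.self_of_nhds.1.continuousAt
    have hf'c := (hf.contDiff (n := 1)).continuous_deriv_one
    refine ContinuousAt.eventually_lt (g := fun _ => 0) ?_ continuousAt_const (by rwa [hφ₀])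
    fun_prop
  have him : ∀ᶠ s : ℝ in 𝓝 r₀, (f ((s : ℂ) * cexp (I * φ s))).im = 0 :=
    hφ.mono fun s hs => hs.2.trans ht₀
  obtain ⟨ε, hε, hball⟩ := Metric.mem_nhds_iff.1 <|
    (lt_mem_nhds hr₀).and <| (hφ.mono fun _ hs => hs.1).and <| him.eventually_nhds.and hα
  rw [Real.ball_eq_Ioo] at hball
  have hderiv : ∀ s ∈ Set.Ioo (r₀ - ε) (r₀ + ε),
      deriv (fun x : ℝ => (f (x * cexp (I * φ x))).re) s < 0 := fun s hs =>
    have ⟨hs₀, hφs, hims, hαs⟩ := hball hs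
    deriv_re_comp_ofReal_mul_cexp_I_mul_neg hs₀ hφs (hf _) hims hαs
  refine ⟨ε, hε, φ, hφ₀, fun s hs => (hball hs).2.1.differentiableWithinAt,
    fun s hs => (hball hs).2.2.1.self_of_nhds, ?_⟩
  refine strictAntiOn_of_deriv_neg (convex_Ioo _ _) (fun s hs => ?_) (by rwa [interior_Ioo])
  exact (differentiableAt_of_deriv_ne_zero (hderiv s hs).ne).continuousAt.continuousWithinAt

end PolarCurves

theorem downcrossing_moves_left (f : Polynomial ℂ) (r₀ : ℝ) (hr₀ : 0 < r₀) (t₀ : ℝ)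
    (ht₀ : (f.eval ((r₀ : ℂ) * Complex.exp (Complex.I * t₀))).im = 0)
    (α₀ : ℂ)
    (hα₀ : α₀ = Complex.I * r₀ * Complex.exp (Complex.I * t₀) *
        f.derivative.eval ((r₀ : ℂ) * Complex.exp (Complex.I * t₀)))
    (him : α₀.im < 0) :
    ∃ ε > (0 : ℝ), ∃ φ : ℝ → ℝ, φ r₀ = t₀ ∧
      DifferentiableOn ℝ φ (Set.Ioo (r₀ - ε) (r₀ + ε)) ∧
      (∀ s ∈ Set.Ioo (r₀ - ε) (r₀ + ε),
        (f.eval ((s : ℂ) * Complex.exp (Complex.I * φ s))).im = 0) ∧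
      StrictAntiOn (fun s : ℝ => (f.eval ((s : ℂ) * Complex.exp (Complex.I * φ s))).re)
        (Set.Ioo (r₀ - ε) (r₀ + ε)) := by
  subst hα₀
  exact exists_strictAntiOn_re_comp_ofReal_mul_cexp_I_mul f.differentiable hr₀ ht₀
    (by simpa only [Polynomial.deriv] using him)
end

section
/- Let f be a polynomial with complex coefficients, 0 < a < b, and let φ : (a, b) → ℝ be differentiable with Im f(s·exp(i φ(s))) = 0 for all s ∈ (a, b). Define α(s) = i·s·exp(i φ(s))·f′(s·exp(i φ(s))) and assume Im α(s) ≠ 0 for all s ∈ (a, b). Then for all s ∈ (a, b): φ′(s) = Re α(s) / (s·Im α(s)), and the function x(s) = Re f(s·exp(i φ(s))) is differentiable with x′(s) = |α(s)|² / (s·Im α(s)). -/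
open Set Complex Polynomial

/-!
Along the curve `u ↦ u·exp(iφ(u))` the chain rule gives `(f ∘ curve)'(s) = α(s)·(φ'(s) - i/s)`.
The curve stays on the real locus of `f`, so this derivative is real: its imaginary part
`φ'(s)·Im α(s) - Re α(s)/s` vanishes, which determines `φ'(s)`, and its real part is then `x'(s)`.
-/

theorem HasDerivWithinAt.re_comp {g : ℝ → ℂ} {g' : ℂ} {S : Set ℝ} {s : ℝ}
    (h : HasDerivWithinAt g g' S s) : HasDerivWithinAt (fun u => (g u).re) g'.re S s :=
  reCLM.hasFDerivAt.comp_hasDerivWithinAt s h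

theorem HasDerivWithinAt.im_comp {g : ℝ → ℂ} {g' : ℂ} {S : Set ℝ} {s : ℝ}
    (h : HasDerivWithinAt g g' S s) : HasDerivWithinAt (fun u => (g u).im) g'.im S s :=
  imCLM.hasFDerivAt.comp_hasDerivWithinAt s h

theorem HasDerivWithinAt.eq_zero_of_eqOn_const {𝕜 F : Type*} [NontriviallyNormedField 𝕜]
    [NormedAddCommGroup F] [NormedSpace 𝕜 F] {g : 𝕜 → F} {g' c : F} {S : Set 𝕜} {x : 𝕜}
    (h : HasDerivWithinAt g g' S x) (hS : UniqueDiffWithinAt 𝕜 S x) (hx : x ∈ S)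
    (hg : ∀ y ∈ S, g y = c) : g' = 0 :=
  hS.eq_deriv S ((hasDerivWithinAt_const x S c).congr_of_mem hg hx) h |>.symm

theorem hasDerivWithinAt_ofReal_mul_cexp_I_mul {φ : ℝ → ℝ} {φ' : ℝ} {S : Set ℝ} {s : ℝ}
    (h : HasDerivWithinAt φ φ' S s) :
    HasDerivWithinAt (fun u : ℝ => (u : ℂ) * exp (I * φ u))
      (exp (I * φ s) * (1 + I * s * φ')) S s :=
  ((hasDerivWithinAt_id s S).ofReal_comp.mul (h.ofReal_comp.const_mul I).cexp).congr_deriv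
    (by simp only [id, ofReal_one]; ring)

theorem hasDerivWithinAt_eval_ofReal_mul_cexp_I_mul (f : ℂ[X]) {φ : ℝ → ℝ} {φ' : ℝ}
    {S : Set ℝ} {s : ℝ} (hs : s ≠ 0) (h : HasDerivWithinAt φ φ' S s) :
    HasDerivWithinAt (fun u : ℝ => f.eval ((u : ℂ) * exp (I * φ u)))
      (I * s * exp (I * φ s) * f.derivative.eval (s * exp (I * φ s)) * (φ' - I / s)) S s := by
  refine ((f.hasDerivAt _).comp_hasDerivWithinAt s
    (hasDerivWithinAt_ofReal_mul_cexp_I_mul h)).congr_deriv ?_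
  have hs' : (s : ℂ) ≠ 0 := ofReal_ne_zero.mpr hs
  have hfactor : I * s * (φ' - I / s) = 1 + I * s * φ' := by
    field_simp
    linear_combination -I_sq
  linear_combination -exp (I * φ s) * f.derivative.eval (s * exp (I * φ s)) * hfactor

theorem Complex.eq_re_div_and_re_eq_of_im_mul_sub_eq_zero {α : ℂ} {t σ : ℝ} (hσ : σ ≠ 0)
    (hα : α.im ≠ 0) (h : (α * (t - I / σ)).im = 0) :
    t = α.re / (σ * α.im) ∧ (α * (t - I / σ)).re = ‖α‖ ^ 2 / (σ * α.im) := by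
  have hz : (t - I / σ : ℂ) = ⟨t, -σ⁻¹⟩ := by
    apply Complex.ext <;> simp
  have him : (α * (t - I / σ)).im = t * α.im - α.re / σ := by
    rw [hz, mul_im]; ring
  have hre : (α * (t - I / σ)).re = t * α.re + α.im / σ := by
    rw [hz, mul_re]; ring
  have ht : t = α.re / (σ * α.im) := by
    rw [him] at h
    field_simp
    field_simp at h
    linarith
  refine ⟨ht, ?_⟩
  rw [hre, ht, Complex.sq_norm, normSq_apply]
  field_simp

theorem crossing_ode_in_r_general (f : Polynomial ℂ) (a b : ℝ)
    (φ : ℝ → ℝ) (hφ : DifferentiableOn ℝ φ (Set.Ioo a b))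
    (him : ∀ s ∈ Set.Ioo a b, (f.eval ((s : ℂ) * Complex.exp (Complex.I * φ s))).im = 0)
    (α : ℝ → ℂ)
    (hα : ∀ s : ℝ, α s = Complex.I * s * Complex.exp (Complex.I * φ s) *
        f.derivative.eval ((s : ℂ) * Complex.exp (Complex.I * φ s)))
    (hαim : ∀ s ∈ Set.Ioo a b, (α s).im ≠ 0) :
    ∀ s ∈ Set.Ioo a b,
      derivWithin φ (Set.Ioo a b) s = (α s).re / (s * (α s).im) ∧
      DifferentiableWithinAt ℝ
        (fun u : ℝ => (f.eval ((u : ℂ) * Complex.exp (Complex.I * φ u))).re)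
        (Set.Ioo a b) s ∧
      derivWithin (fun u : ℝ => (f.eval ((u : ℂ) * Complex.exp (Complex.I * φ u))).re)
        (Set.Ioo a b) s = (‖α s‖) ^ 2 / (s * (α s).im) := by
  intro s hs
  have hαs := hαim s hs
  have hs0 : s ≠ 0 := by
    rintro rfl
    simp [hα] at hαs
  have hg := hasDerivWithinAt_eval_ofReal_mul_cexp_I_mul f hs0 (hφ s hs).hasDerivWithinAt
  rw [← hα s] at hg
  have hU : UniqueDiffWithinAt ℝ (Ioo a b) s := uniqueDiffOn_Ioo a b s hs
  have hg_im_zero := hg.im_comp.eq_zero_of_eqOn_const hU hs him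
  obtain ⟨hφ', hx'⟩ := eq_re_div_and_re_eq_of_im_mul_sub_eq_zero hs0 hαs hg_im_zero
  exact ⟨hφ', hg.re_comp.differentiableWithinAt, (hg.re_comp.derivWithin hU).trans hx'⟩

theorem crossing_ode_in_r (f : Polynomial ℂ) (a b : ℝ) (ha : 0 < a) (hab : a < b)
    (φ : ℝ → ℝ) (hφ : DifferentiableOn ℝ φ (Set.Ioo a b))
    (him : ∀ s ∈ Set.Ioo a b, (f.eval ((s : ℂ) * Complex.exp (Complex.I * φ s))).im = 0)
    (α : ℝ → ℂ)
    (hα : ∀ s : ℝ, α s = Complex.I * s * Complex.exp (Complex.I * φ s) *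
        f.derivative.eval ((s : ℂ) * Complex.exp (Complex.I * φ s)))
    (hαim : ∀ s ∈ Set.Ioo a b, (α s).im ≠ 0) :
    ∀ s ∈ Set.Ioo a b,
      derivWithin φ (Set.Ioo a b) s = (α s).re / (s * (α s).im) ∧
      DifferentiableWithinAt ℝ
        (fun u : ℝ => (f.eval ((u : ℂ) * Complex.exp (Complex.I * φ u))).re)
        (Set.Ioo a b) s ∧
      derivWithin (fun u : ℝ => (f.eval ((u : ℂ) * Complex.exp (Complex.I * φ u))).re)
        (Set.Ioo a b) s = (‖α s‖) ^ 2 / (s * (α s).im) :=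
  crossing_ode_in_r_general f a b φ hφ him α hα hαim
end

section
/- Let f be a polynomial with complex coefficients, let a < b be real, and let ρ : (a, b) → ℝ be differentiable with ρ(θ) > 0 and Im f(ρ(θ)·exp(i θ)) = 0 for all θ ∈ (a, b). Define β(θ) = i·ρ(θ)·exp(i θ)·f′(ρ(θ)·exp(i θ)) and assume Re β(θ) ≠ 0 for all θ ∈ (a, b). Then for all θ ∈ (a, b): ρ′(θ) = ρ(θ)·Im β(θ) / Re β(θ), and the function x(θ) = Re f(ρ(θ)·exp(i θ)) is differentiable with x′(θ) = |β(θ)|² / Re β(θ). -/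
/-!
Along the curve `g u = f (ρ u * exp (i u))` the chain rule gives
`g' θ = β θ * (1 - i ρ' θ / ρ θ)`. Since `g` is real-valued near `θ`, `g' θ` is real: its imaginary
part `Im β - (ρ'/ρ) Re β` vanishes, which is the ODE for `ρ`, and its real part is then
`Re β + (Im β)² / Re β = |β|² / Re β`.
-/

open Complex Filter Topology

theorem HasDerivAt.comp_polar {F : ℂ → ℂ} {F' : ℂ} {ρ : ℝ → ℝ} {ρ' θ : ℝ}
    (hF : HasDerivAt F F' ((ρ θ : ℂ) * cexp (I * θ))) (hρ : HasDerivAt ρ ρ' θ) (hρ0 : ρ θ ≠ 0) :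
    HasDerivAt (fun u : ℝ => F ((ρ u : ℂ) * cexp (I * u)))
      (I * (ρ θ : ℂ) * cexp (I * θ) * F' * (1 - I * ↑(ρ' / ρ θ))) θ := by
  have hexp : HasDerivAt (fun u : ℝ => cexp (I * u)) (cexp (I * θ) * I) θ := by
    simpa using (((hasDerivAt_id θ).ofReal_comp.const_mul I).cexp)
  refine (hF.comp θ (hρ.ofReal_comp.mul hexp)).congr_deriv ?_
  have : (ρ θ : ℂ) ≠ 0 := ofReal_ne_zero.mpr hρ0
  rw [ofReal_div]
  field_simp
  ring_nf
  rw [I_sq]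
  ring

section RealToComplex

variable {g : ℝ → ℂ} {g' : ℂ} {θ : ℝ}

theorem HasDerivAt.re (hg : HasDerivAt g g' θ) : HasDerivAt (fun u => (g u).re) g'.re θ :=
  reCLM.hasFDerivAt.comp_hasDerivAt θ hg

theorem HasDerivAt.im (hg : HasDerivAt g g' θ) : HasDerivAt (fun u => (g u).im) g'.im θ :=
  imCLM.hasFDerivAt.comp_hasDerivAt θ hg

theorem HasDerivAt.im_eq_zero_of_eventually_im_eq_zero_s14 (hg : HasDerivAt g g' θ)
    (him : ∀ᶠ u in 𝓝 θ, (g u).im = 0) : g'.im = 0 :=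
  hg.im.unique <| (hasDerivAt_const θ 0).congr_of_eventuallyEq him

end RealToComplex

theorem Complex.eq_im_div_re_of_im_mul_one_sub_I_mul_eq_zero {β : ℂ} {s : ℝ}
    (h : (β * (1 - I * s)).im = 0) (hβ : β.re ≠ 0) : s = β.im / β.re := by
  simp only [mul_im, sub_re, one_re, mul_re, I_re, ofReal_re, I_im, ofReal_im, sub_im,
    one_im] at h
  field_simp
  linarith

theorem Complex.re_mul_one_sub_I_mul_im_div_re {β : ℂ} (hβ : β.re ≠ 0) :
    (β * (1 - I * ↑(β.im / β.re))).re = ‖β‖ ^ 2 / β.re := by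
  rw [Complex.sq_norm, normSq_apply]
  simp only [mul_re, sub_re, one_re, I_re, ofReal_re, I_im, ofReal_im, sub_im, one_im, mul_im]
  field_simp
  ring

theorem crossing_ode_in_theta_general (f : Polynomial ℂ) (a b : ℝ)
    (ρ : ℝ → ℝ) (hρ : DifferentiableOn ℝ ρ (Set.Ioo a b))
    (hρpos : ∀ θ ∈ Set.Ioo a b, 0 < ρ θ)
    (him : ∀ θ ∈ Set.Ioo a b, (f.eval ((ρ θ : ℂ) * Complex.exp (Complex.I * θ))).im = 0)
    (β : ℝ → ℂ)
    (hβ : ∀ θ : ℝ, β θ = Complex.I * (ρ θ) * Complex.exp (Complex.I * θ) *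
        f.derivative.eval ((ρ θ : ℂ) * Complex.exp (Complex.I * θ)))
    (hβre : ∀ θ ∈ Set.Ioo a b, (β θ).re ≠ 0) :
    ∀ θ ∈ Set.Ioo a b,
      derivWithin ρ (Set.Ioo a b) θ = ρ θ * (β θ).im / (β θ).re ∧
      DifferentiableWithinAt ℝ
        (fun u : ℝ => (f.eval ((ρ u : ℂ) * Complex.exp (Complex.I * u))).re)
        (Set.Ioo a b) θ ∧
      derivWithin (fun u : ℝ => (f.eval ((ρ u : ℂ) * Complex.exp (Complex.I * u))).re)
        (Set.Ioo a b) θ = ‖β θ‖ ^ 2 / (β θ).re := by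
  intro θ hθ
  have hnhds : Set.Ioo a b ∈ 𝓝 θ := isOpen_Ioo.mem_nhds hθ
  have hρ0 : ρ θ ≠ 0 := (hρpos θ hθ).ne'
  have hg := (f.hasDerivAt _).comp_polar ((hρ θ hθ).differentiableAt hnhds).hasDerivAt hρ0
  rw [← hβ] at hg
  have hs : deriv ρ θ / ρ θ = (β θ).im / (β θ).re :=
    eq_im_div_re_of_im_mul_one_sub_I_mul_eq_zero
      (hg.im_eq_zero_of_eventually_im_eq_zero_s14 (eventually_of_mem hnhds him)) (hβre θ hθ)
  have hre := hg.re
  rw [hs, re_mul_one_sub_I_mul_im_div_re (hβre θ hθ)] at hre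
  refine ⟨?_, hre.differentiableAt.differentiableWithinAt, ?_⟩
  · rw [derivWithin_of_mem_nhds hnhds, mul_div_assoc, ← hs]
    field_simp
  · rw [derivWithin_of_mem_nhds hnhds, hre.deriv]

theorem crossing_ode_in_theta (f : Polynomial ℂ) (a b : ℝ) (hab : a < b)
    (ρ : ℝ → ℝ) (hρ : DifferentiableOn ℝ ρ (Set.Ioo a b))
    (hρpos : ∀ θ ∈ Set.Ioo a b, 0 < ρ θ)
    (him : ∀ θ ∈ Set.Ioo a b, (f.eval ((ρ θ : ℂ) * Complex.exp (Complex.I * θ))).im = 0)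
    (β : ℝ → ℂ)
    (hβ : ∀ θ : ℝ, β θ = Complex.I * (ρ θ) * Complex.exp (Complex.I * θ) *
        f.derivative.eval ((ρ θ : ℂ) * Complex.exp (Complex.I * θ)))
    (hβre : ∀ θ ∈ Set.Ioo a b, (β θ).re ≠ 0) :
    ∀ θ ∈ Set.Ioo a b,
      derivWithin ρ (Set.Ioo a b) θ = ρ θ * (β θ).im / (β θ).re ∧
      DifferentiableWithinAt ℝ
        (fun u : ℝ => (f.eval ((ρ u : ℂ) * Complex.exp (Complex.I * u))).re)
        (Set.Ioo a b) θ ∧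
      derivWithin (fun u : ℝ => (f.eval ((ρ u : ℂ) * Complex.exp (Complex.I * u))).re)
        (Set.Ioo a b) θ = ‖β θ‖ ^ 2 / (β θ).re :=
  crossing_ode_in_theta_general f a b ρ hρ hρpos him β hβ hβre
end

section
/- Let f be a polynomial with complex coefficients and define u : (0, ∞) × ℝ → ℝ by u(s, θ) = Im f(s·exp(i θ)). Suppose r > 0 and t ∈ ℝ satisfy: u(r, t) = 0, ∂u/∂θ(r, t) = 0, ∂²u/∂θ²(r, t) < 0, and ∂u/∂s(r, t) > 0. Then there exist ε > 0 and δ > 0 such that: (a) for every s ∈ (r − ε, r), u(s, θ) < 0 for all θ ∈ [t − δ, t + δ]; and (b) for every s ∈ (r, r + ε), the function θ ↦ u(s, θ) has exactly two zeros θ₁ < θ₂ in (t − δ, t + δ), where θ₁ is an upcrossing of f_s and θ₂ is a downcrossing of f_s. (A point of tangency of f_r with the real axis splits, as r increases, into an upcrossing–downcrossing pair.) -/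
open Complex Polynomial Set

private noncomputable def zz (s θ : ℝ) : ℂ := (s : ℝ) * Complex.exp (Complex.I * θ)

private noncomputable def DD (p : Polynomial ℂ) : Polynomial ℂ :=
  Polynomial.C Complex.I * Polynomial.X * p.derivative

private noncomputable def IM (p : Polynomial ℂ) (s θ : ℝ) : ℝ := (p.eval (zz s θ)).im

private noncomputable def QQ (p : Polynomial ℂ) (s θ : ℝ) : ℝ :=
  (p.derivative.eval (zz s θ) * Complex.exp (Complex.I * θ)).im

private lemma hasDerivAt_zz_theta (s θ : ℝ) :
    HasDerivAt (fun θ : ℝ => zz s θ) (zz s θ * Complex.I) θ := by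
  have h0 : HasDerivAt (fun θ : ℝ => Complex.I * (θ : ℂ)) Complex.I θ := by
    simpa using ((Complex.ofRealCLM.hasDerivAt (x := θ)).const_mul Complex.I)
  have h1 := (Complex.hasDerivAt_exp (Complex.I * θ)).comp θ h0
  have h2 := h1.const_mul (s : ℂ)
  simpa [zz, Function.comp, mul_comm, mul_assoc, mul_left_comm] using h2

private lemma lem1 (p : Polynomial ℂ) (s θ : ℝ) :
    HasDerivAt (fun θ : ℝ => IM p s θ) (IM (DD p) s θ) θ := by
  have h2 := (p.hasDerivAt (zz s θ)).comp θ (hasDerivAt_zz_theta s θ)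
  have h3 := Complex.imCLM.hasFDerivAt.comp_hasDerivAt θ h2
  have he : IM (DD p) s θ = (p.derivative.eval (zz s θ) * (zz s θ * Complex.I)).im := by
    unfold IM DD
    congr 1
    simp [eval_mul]
    ring
  rw [he]
  exact h3

private lemma lem2 (p : Polynomial ℂ) (s θ : ℝ) :
    HasDerivAt (fun s : ℝ => IM p s θ) (QQ p s θ) s := by
  have h1 : HasDerivAt (fun s : ℝ => zz s θ) (Complex.exp (Complex.I * θ)) s := by
    simpa [zz] using
      (Complex.ofRealCLM.hasDerivAt (x := s)).mul_const (Complex.exp (Complex.I * θ))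
  have h2 := (p.hasDerivAt (zz s θ)).comp s h1
  exact Complex.imCLM.hasFDerivAt.comp_hasDerivAt s h2

private lemma continuous_zz : Continuous (fun q : ℝ × ℝ => zz q.1 q.2) := by
  unfold zz; fun_prop

private lemma lem3 (p : Polynomial ℂ) : Continuous (fun q : ℝ × ℝ => IM p q.1 q.2) :=
  Complex.continuous_im.comp (p.continuous.comp continuous_zz)

private lemma lem3θ (p : Polynomial ℂ) (s : ℝ) : Continuous (fun θ : ℝ => IM p s θ) :=
  (lem3 p).comp (continuous_const.prodMk continuous_id)

private lemma lem3s (p : Polynomial ℂ) (θ : ℝ) : Continuous (fun s : ℝ => IM p s θ) :=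
  (lem3 p).comp (continuous_id.prodMk continuous_const)

private lemma lem4 (p : Polynomial ℂ) : Continuous (fun q : ℝ × ℝ => QQ p q.1 q.2) := by
  unfold QQ
  apply Complex.continuous_im.comp
  apply Continuous.mul
  · exact p.derivative.continuous.comp continuous_zz
  · fun_prop

theorem tangency_splits (f : Polynomial ℂ)
    (u : ℝ → ℝ → ℝ)
    (hu : ∀ s θ : ℝ, u s θ = (f.eval ((s : ℂ) * Complex.exp (Complex.I * θ))).im)
    (r t : ℝ) (hr : 0 < r)
    (h0 : u r t = 0)
    (h1 : deriv (fun θ => u r θ) t = 0)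
    (h2 : deriv (deriv (fun θ => u r θ)) t < 0)
    (h3 : 0 < deriv (fun s => u s t) r) :
    ∃ ε > (0 : ℝ), ∃ δ > (0 : ℝ),
      (∀ s ∈ Set.Ioo (r - ε) r, ∀ θ ∈ Set.Icc (t - δ) (t + δ), u s θ < 0) ∧
      (∀ s ∈ Set.Ioo r (r + ε), ∃ θ₁ θ₂ : ℝ,
        θ₁ ∈ Set.Ioo (t - δ) (t + δ) ∧ θ₂ ∈ Set.Ioo (t - δ) (t + δ) ∧ θ₁ < θ₂ ∧
        u s θ₁ = 0 ∧ u s θ₂ = 0 ∧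
        (∀ θ ∈ Set.Ioo (t - δ) (t + δ), u s θ = 0 → θ = θ₁ ∨ θ = θ₂) ∧
        IsUpcrossing f s θ₁ ∧ IsDowncrossing f s θ₂) := by
  have huU : ∀ s : ℝ, (fun θ => u s θ) = fun θ => IM f s θ :=
    fun s => funext fun θ => hu s θ
  have huU' : ∀ θ : ℝ, (fun s => u s θ) = fun s => IM f s θ :=
    fun θ => funext fun s => hu s θ
  have hA : ∀ s θ : ℝ, HasDerivAt (fun θ => u s θ) (IM (DD f) s θ) θ := by
    intro s θ; rw [huU s]; exact lem1 f s θ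
  have hC : ∀ s θ : ℝ, HasDerivAt (fun s => u s θ) (QQ f s θ) s := by
    intro s θ; rw [huU' θ]; exact lem2 f s θ
  have hcontθ : ∀ s : ℝ, Continuous (fun θ => u s θ) := by
    intro s; rw [huU s]; exact lem3θ f s
  have hconts : ∀ θ : ℝ, Continuous (fun s => u s θ) := by
    intro θ; rw [huU' θ]; exact lem3s f θ
  have hderiv1 : ∀ s, deriv (fun θ => u s θ) = fun θ => IM (DD f) s θ :=
    fun s => funext fun θ => (hA s θ).deriv
  have h1' : IM (DD f) r t = 0 := by rw [hderiv1 r] at h1; exact h1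
  have h2' : IM (DD (DD f)) r t < 0 := by
    rw [hderiv1 r] at h2; rwa [(lem1 (DD f) r t).deriv] at h2
  have h3' : 0 < QQ f r t := by rwa [(hC r t).deriv] at h3
  -- a box on which the second θ-derivative is negative and the s-derivative positive
  have hopen : IsOpen {q : ℝ × ℝ | IM (DD (DD f)) q.1 q.2 < 0 ∧ 0 < QQ f q.1 q.2} :=
    (isOpen_lt (lem3 (DD (DD f))) continuous_const).inter
      (isOpen_lt continuous_const (lem4 f))
  obtain ⟨η, hη, hball⟩ := Metric.isOpen_iff.mp hopen (r, t) ⟨h2', h3'⟩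
  set δ := η / 2 with hδdef
  have hδ : 0 < δ := by positivity
  have hbox : ∀ s θ : ℝ, |s - r| ≤ δ → |θ - t| ≤ δ →
      IM (DD (DD f)) s θ < 0 ∧ 0 < QQ f s θ := by
    intro s θ hs ht'
    have hmem : ((s, θ) : ℝ × ℝ) ∈ Metric.ball ((r, t) : ℝ × ℝ) η := by
      rw [Metric.mem_ball, Prod.dist_eq]
      refine max_lt ?_ ?_
      · calc dist s r = |s - r| := Real.dist_eq s r
            _ ≤ δ := hs
            _ < η := by rw [hδdef]; linarith
      · calc dist θ t = |θ - t| := Real.dist_eq θ t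
            _ ≤ δ := ht'
            _ < η := by rw [hδdef]; linarith
    exact hball hmem
  -- strict monotonicity in s on the box
  have hmono : ∀ θ : ℝ, |θ - t| ≤ δ →
      StrictMonoOn (fun s => u s θ) (Icc (r - δ) (r + δ)) := by
    intro θ hθ
    apply strictMonoOn_of_deriv_pos (convex_Icc _ _) (hconts θ).continuousOn
    intro s hs
    rw [interior_Icc] at hs
    rw [(hC s θ).deriv]
    exact (hbox s θ (abs_le.mpr ⟨by linarith [hs.1], by linarith [hs.2]⟩) hθ).2
  -- the θ-derivative of u r is strictly decreasing near t
  have hanti : StrictAntiOn (fun θ => IM (DD f) r θ) (Icc (t - δ) (t + δ)) := by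
    apply strictAntiOn_of_deriv_neg (convex_Icc _ _) (lem3θ (DD f) r).continuousOn
    intro θ hθ
    rw [interior_Icc] at hθ
    rw [(lem1 (DD f) r θ).deriv]
    exact (hbox r θ (by simpa using hδ.le)
      (abs_le.mpr ⟨by linarith [hθ.1], by linarith [hθ.2]⟩)).1
  have htmem : t ∈ Icc (t - δ) (t + δ) := ⟨by linarith, by linarith⟩
  -- u r is negative on the punctured δ-interval around t
  have hUrneg : ∀ θ ∈ Icc (t - δ) (t + δ), θ ≠ t → u r θ < 0 := by
    intro θ hθ hne
    rcases lt_or_gt_of_ne hne with hlt | hgt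
    · have hm : StrictMonoOn (fun θ => u r θ) (Icc θ t) := by
        apply strictMonoOn_of_deriv_pos (convex_Icc _ _) (hcontθ r).continuousOn
        intro x hx
        rw [interior_Icc] at hx
        rw [(hA r x).deriv]
        have hxmem : x ∈ Icc (t - δ) (t + δ) :=
          ⟨by linarith [hθ.1, hx.1], by linarith [hx.2]⟩
        have hxt := hanti hxmem htmem hx.2
        simpa only [h1'] using hxt
      have := hm (left_mem_Icc.mpr hlt.le) (right_mem_Icc.mpr hlt.le) hlt
      simpa [h0] using this
    · have hm : StrictAntiOn (fun θ => u r θ) (Icc t θ) := by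
        apply strictAntiOn_of_deriv_neg (convex_Icc _ _) (hcontθ r).continuousOn
        intro x hx
        rw [interior_Icc] at hx
        rw [(hA r x).deriv]
        have hxmem : x ∈ Icc (t - δ) (t + δ) :=
          ⟨by linarith [hx.1], by linarith [hθ.2, hx.2]⟩
        have hxt := hanti htmem hxmem hx.1
        simpa only [h1'] using hxt
      have := hm (left_mem_Icc.mpr hgt.le) (right_mem_Icc.mpr hgt.le) hgt
      simpa [h0] using this
  have hend1 : u r (t - δ) < 0 :=
    hUrneg _ ⟨le_refl _, by linarith⟩ (by intro h; linarith [congrArg id h])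
  have hend2 : u r (t + δ) < 0 :=
    hUrneg _ ⟨by linarith, le_refl _⟩ (by intro h; linarith [congrArg id h])
  have hev : ∀ᶠ s in nhds r, u s (t - δ) < 0 ∧ u s (t + δ) < 0 := by
    have c1 : ContinuousAt (fun s => u s (t - δ)) r := (hconts (t - δ)).continuousAt
    have c2 : ContinuousAt (fun s => u s (t + δ)) r := (hconts (t + δ)).continuousAt
    exact (c1.eventually_lt continuousAt_const hend1).and
      (c2.eventually_lt continuousAt_const hend2)
  obtain ⟨ε₁, hε₁, hev'⟩ := Metric.eventually_nhds_iff.mp hev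
  refine ⟨min δ ε₁, lt_min hδ hε₁, δ, hδ, ?_, ?_⟩
  · -- part (a)
    intro s hs θ hθ
    have hsδ : s ∈ Icc (r - δ) (r + δ) :=
      ⟨by linarith [hs.1, min_le_left δ ε₁], by linarith [hs.2]⟩
    have hθδ : |θ - t| ≤ δ := abs_le.mpr ⟨by linarith [hθ.1], by linarith [hθ.2]⟩
    have h5 := hmono θ hθδ hsδ (⟨by linarith, by linarith⟩ : r ∈ Icc (r - δ) (r + δ)) hs.2
    have h6 : u r θ ≤ 0 := by
      by_cases hθt : θ = t
      · exact le_of_eq (by rw [hθt, h0])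
      · exact (hUrneg θ hθ hθt).le
    simp only at h5
    linarith
  · -- part (b)
    intro s hs
    have hsr : r < s := hs.1
    have hsδ' : |s - r| ≤ δ :=
      abs_le.mpr ⟨by linarith, by linarith [hs.2, min_le_left δ ε₁]⟩
    have hsIcc : s ∈ Icc (r - δ) (r + δ) := ⟨by linarith, by linarith [hs.2, min_le_left δ ε₁]⟩
    have hpos : 0 < u s t := by
      have := hmono t (by simpa using hδ.le)
        (⟨by linarith, by linarith⟩ : r ∈ Icc (r - δ) (r + δ)) hsIcc hsr
      simp only at this
      linarith [h0, this]
    have hneg : u s (t - δ) < 0 ∧ u s (t + δ) < 0 := by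
      refine hev' ?_
      rw [Real.dist_eq]
      exact abs_lt.mpr ⟨by linarith, by linarith [hs.2, min_le_right δ ε₁]⟩
    -- strict concavity of θ ↦ u s θ
    have hconc : StrictConcaveOn ℝ (Icc (t - δ) (t + δ)) (fun θ => u s θ) := by
      apply strictConcaveOn_of_deriv2_neg (convex_Icc _ _) (hcontθ s).continuousOn
      intro x hx
      rw [interior_Icc] at hx
      show deriv (deriv (fun θ => u s θ)) x < 0
      rw [hderiv1 s, (lem1 (DD f) s x).deriv]
      exact (hbox s x hsδ' (abs_le.mpr ⟨by linarith [hx.1], by linarith [hx.2]⟩)).1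
    -- IVT zeros
    obtain ⟨θ₁, hθ₁mem, hθ₁⟩ :=
      intermediate_value_Ioo (by linarith : t - δ ≤ t) ((hcontθ s).continuousOn)
        (⟨hneg.1, hpos⟩ : (0:ℝ) ∈ Ioo (u s (t - δ)) (u s t))
    obtain ⟨θ₂, hθ₂mem, hθ₂⟩ :=
      intermediate_value_Ioo' (by linarith : t ≤ t + δ) ((hcontθ s).continuousOn)
        (⟨hneg.2, hpos⟩ : (0:ℝ) ∈ Ioo (u s (t + δ)) (u s t))
    simp only at hθ₁ hθ₂
    have hlt12 : θ₁ < θ₂ := lt_trans hθ₁mem.2 hθ₂mem.1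
    have hm1 : θ₁ ∈ Icc (t - δ) (t + δ) := ⟨hθ₁mem.1.le, by linarith [hθ₁mem.2]⟩
    have hm2 : θ₂ ∈ Icc (t - δ) (t + δ) := ⟨by linarith [hθ₂mem.1], hθ₂mem.2.le⟩
    have hposmid : ∀ x ∈ Ioo θ₁ θ₂, 0 < u s x := by
      intro x hx
      have := hconc.lt_on_openSegment hm1 hm2 (ne_of_lt hlt12)
        (by rw [openSegment_eq_Ioo hlt12]; exact hx)
      rwa [hθ₁, hθ₂, min_self] at this
    have hnegleft : ∀ x ∈ Icc (t - δ) (t + δ), x < θ₁ → u s x < 0 := by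
      intro x hx hlt
      have hxt : x < t := lt_trans hlt hθ₁mem.2
      have := hconc.lt_on_openSegment hx htmem (ne_of_lt hxt)
        (by rw [openSegment_eq_Ioo hxt]; exact ⟨hlt, hθ₁mem.2⟩)
      rw [hθ₁] at this
      rcases min_lt_iff.mp this with h | h
      · exact h
      · linarith
    have hnegright : ∀ x ∈ Icc (t - δ) (t + δ), θ₂ < x → u s x < 0 := by
      intro x hx hlt
      have hxt : t < x := lt_trans hθ₂mem.1 hlt
      have := hconc.lt_on_openSegment htmem hx (ne_of_lt hxt)
        (by rw [openSegment_eq_Ioo hxt]; exact ⟨hθ₂mem.1, hlt⟩)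
      rw [hθ₂] at this
      rcases min_lt_iff.mp this with h | h
      · linarith
      · exact h
    refine ⟨θ₁, θ₂, ⟨hθ₁mem.1, by linarith [hθ₁mem.2]⟩,
      ⟨by linarith [hθ₂mem.1], hθ₂mem.2⟩, hlt12, hθ₁, hθ₂, ?_, ?_, ?_⟩
    · -- uniqueness of zeros
      intro x hx hx0
      rcases lt_trichotomy x θ₁ with h | h | h
      · exact absurd hx0 (ne_of_lt (hnegleft x ⟨hx.1.le, hx.2.le⟩ h))
      · exact Or.inl h
      · rcases lt_trichotomy x θ₂ with h' | h' | h'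
        · exact absurd hx0 (ne_of_gt (hposmid x ⟨h, h'⟩))
        · exact Or.inr h'
        · exact absurd hx0 (ne_of_lt (hnegright x ⟨hx.1.le, hx.2.le⟩ h'))
    · -- upcrossing at θ₁
      refine ⟨by rw [← hu s θ₁]; exact hθ₁,
        min (θ₁ - (t - δ)) (θ₂ - θ₁), lt_min (by linarith [hθ₁mem.1]) (by linarith), ?_, ?_⟩
      · intro x hx
        rw [← hu s x]
        rcases eq_or_lt_of_le hx.2 with he | hlt'
        · rw [he, hθ₁]
        · refine (hnegleft x ⟨?_, ?_⟩ hlt').le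
          · linarith [hx.1, min_le_left (θ₁ - (t - δ)) (θ₂ - θ₁)]
          · linarith [hm1.2]
      · intro x hx
        rw [← hu s x]
        rcases eq_or_lt_of_le hx.1 with he | h1''
        · rw [← he, hθ₁]
        · rcases eq_or_lt_of_le
            (show x ≤ θ₂ by linarith [hx.2, min_le_right (θ₁ - (t - δ)) (θ₂ - θ₁)]) with
            he2 | h2''
          · rw [he2, hθ₂]
          · exact (hposmid x ⟨h1'', h2''⟩).le
    · -- downcrossing at θ₂
      refine ⟨by rw [← hu s θ₂]; exact hθ₂,
        min (θ₂ - θ₁) (t + δ - θ₂), lt_min (by linarith) (by linarith [hθ₂mem.2]), ?_, ?_⟩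
      · intro x hx
        rw [← hu s x]
        rcases eq_or_lt_of_le hx.2 with he | hlt'
        · rw [he, hθ₂]
        · rcases eq_or_lt_of_le
            (show θ₁ ≤ x by linarith [hx.1, min_le_left (θ₂ - θ₁) (t + δ - θ₂)]) with
            he2 | h2''
          · rw [← he2, hθ₁]
          · exact (hposmid x ⟨h2'', hlt'⟩).le
      · intro x hx
        rw [← hu s x]
        rcases eq_or_lt_of_le hx.1 with he | h1''
        · rw [← he, hθ₂]
        · refine (hnegright x ⟨?_, ?_⟩ h1'').le
          · linarith [hm2.1]
          · linarith [hx.2, min_le_right (θ₂ - θ₁) (t + δ - θ₂)]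
end

section
/- Let f be a polynomial with complex coefficients, 0 < a < b < ∞, and let φ : (a, b) → ℝ be continuous with Im f(s·exp(i φ(s))) = 0 for all s ∈ (a, b). Suppose φ(s) converges to some t* ∈ ℝ as s → b⁻, and suppose Im α* ≠ 0 where α* = i·b·exp(i t*)·f′(b·exp(i t*)). Then there exist ε > 0 and a continuous function φ̃ : (a, b + ε) → ℝ extending φ such that Im f(s·exp(i φ̃(s))) = 0 for all s ∈ (a, b + ε). (A crossing-point function can be extended past its right endpoint unless the curve f_b is tangent to the real axis there.) -/
/-!
Near `z₀ = b e^{i t*}` the polynomial `f` is locally invertible, because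
`α* = i z₀ f'(z₀)` is non-zero. Its local inverse maps a real interval around the real value
`f(z₀)` onto a curve `γ` through `z₀` on which `f` is real. The tangent `1 / f'(z₀)` of this curve
is transversal to the circle `|z| = b` exactly when `Re (z₀ f'(z₀)) = Im α* ≠ 0`, so `|γ|` is a
local coordinate on `γ`; parametrising `γ` by its modulus and taking a continuous argument
gives the extension of `φ` beyond `b`.
-/

open Complex Filter Set Topology
open scoped RealInnerProductSpace

namespace HasStrictDerivAt

variable {𝕜 : Type*} [NontriviallyNormedField 𝕜] [CompleteSpace 𝕜] {f : 𝕜 → 𝕜} {f' a : 𝕜}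

theorem eventually_continuousAt_localInverse (hf : HasStrictDerivAt f f' a) (hf' : f' ≠ 0) :
    ∀ᶠ y in 𝓝 (f a), ContinuousAt (hf.localInverse f f' a hf') y := by
  set e := (hf.hasStrictFDerivAt_equiv hf').toOpenPartialHomeomorph f
  filter_upwards [e.open_target.mem_nhds
    (hf.hasStrictFDerivAt_equiv hf').image_mem_toOpenPartialHomeomorph_target] with y hy
  exact e.continuousAt_symm hy

theorem exists_reparam_norm_eq {E : Type*} [NormedAddCommGroup E] [InnerProductSpace ℝ E]
    {p : ℝ → E} {v : E} {x₀ : ℝ} (hp : HasStrictDerivAt p v x₀) (hv : ⟪p x₀, v⟫ ≠ 0) :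
    ∃ k : ℝ → ℝ, k ‖p x₀‖ = x₀ ∧ ∀ᶠ s in 𝓝 ‖p x₀‖, ContinuousAt k s ∧ ‖p (k s)‖ = s := by
  have hp₀ : 0 < ‖p x₀‖ := norm_pos_iff.2 fun h => hv (by simp [h])
  have hsq : HasStrictDerivAt (fun x => ‖p x‖ ^ 2) (2 * ⟪p x₀, v⟫) x₀ := by
    have := (hasStrictFDerivAt_norm_sq (p x₀)).comp_hasStrictDerivAt x₀ hp
    simp only [smul_apply, innerSL_apply_apply, nsmul_eq_mul, Nat.cast_ofNat] at this
    exact this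
  have hsq' : 2 * ⟪p x₀, v⟫ ≠ 0 := mul_ne_zero two_ne_zero hv
  refine ⟨fun s => hsq.localInverse _ _ _ hsq' (s ^ 2),
    (hsq.eventually_left_inverse hsq').self_of_nhds, ?_⟩
  have hpow : Tendsto (· ^ 2) (𝓝 ‖p x₀‖) (𝓝 (‖p x₀‖ ^ 2)) := (continuous_pow 2).tendsto _
  filter_upwards [hpow.eventually (hsq.eventually_continuousAt_localInverse hsq'),
    hpow.eventually (hsq.eventually_right_inverse hsq'), eventually_gt_nhds hp₀]
    with s hcont hinv hs
  exact ⟨hcont.comp (f := fun s : ℝ => s ^ 2) (continuous_pow 2).continuousAt,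
    (pow_left_inj₀ (norm_nonneg _) hs.le two_ne_zero).1 hinv⟩

end HasStrictDerivAt

theorem Complex.inner_inv_right (z D : ℂ) : ⟪z, D⁻¹⟫ = (z * D).re / normSq D := by
  rw [Complex.inner, inv_def]
  simp only [mul_re, mul_im, conj_re, conj_im, ofReal_re, ofReal_im]
  ring

theorem HasStrictDerivAt.exists_curve_norm_eq_im_eq_zero {F : ℂ → ℂ} {D z₀ : ℂ}
    (hF : HasStrictDerivAt F D z₀) (hre : (z₀ * D).re ≠ 0) (him : (F z₀).im = 0) :
    ∃ γ : ℝ → ℂ, γ ‖z₀‖ = z₀ ∧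
      ∀ᶠ s in 𝓝 ‖z₀‖, ContinuousAt γ s ∧ ‖γ s‖ = s ∧ (F (γ s)).im = 0 := by
  have hD : D ≠ 0 := by rintro rfl; simp at hre
  set g := hF.localInverse F D z₀ hD
  have hw₀ : ((F z₀).re : ℂ) = F z₀ := Complex.ext rfl (by simp [him])
  have hp : HasStrictDerivAt (fun x : ℝ => g x) D⁻¹ (F z₀).re := by
    have := (hw₀ ▸ hF.to_localInverse hD).comp (F z₀).re ofRealCLM.hasStrictDerivAt
    simp only [ofRealCLM_apply, ofReal_one, mul_one] at this
    exact this
  have hp₀ : g (F z₀).re = z₀ := hw₀ ▸ (hF.eventually_left_inverse hD).self_of_nhds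
  have hv : ⟪g (F z₀).re, D⁻¹⟫ ≠ 0 := by
    rw [hp₀, Complex.inner_inv_right]
    exact div_ne_zero hre (normSq_pos.2 hD).ne'
  obtain ⟨k, hk₀, hk⟩ := hp.exists_reparam_norm_eq hv
  rw [hp₀] at hk₀ hk
  refine ⟨fun s => g (k s), by simp only [hk₀, hp₀], ?_⟩
  have hk_tendsto : Tendsto (fun s => (k s : ℂ)) (𝓝 ‖z₀‖) (𝓝 (F z₀)) := by
    rw [← hw₀, ← hk₀]
    exact (continuous_ofReal.continuousAt.comp hk.self_of_nhds.1).tendsto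
  filter_upwards [hk, hk_tendsto.eventually (hF.eventually_continuousAt_localInverse hD),
    hk_tendsto.eventually (hF.eventually_right_inverse hD)] with s ⟨hkc, hnorm⟩ hgc hinv
  refine ⟨hgc.comp (f := fun s => (k s : ℂ)) (continuous_ofReal.continuousAt.comp hkc), hnorm, ?_⟩
  rw [hinv, ofReal_im]

theorem exists_continuous_arg_of_norm_eq {γ : ℝ → ℂ} {s₀ t₀ : ℝ} (hs₀ : 0 < s₀)
    (hγ₀ : γ s₀ = s₀ * exp (I * t₀)) (hγ : ∀ᶠ s in 𝓝 s₀, ContinuousAt γ s ∧ ‖γ s‖ = s) :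
    ∃ ψ : ℝ → ℝ, ψ s₀ = t₀ ∧ ∀ᶠ s in 𝓝 s₀, ContinuousAt ψ s ∧ γ s = s * exp (I * ψ s) := by
  have hz₀ : γ s₀ ≠ 0 := by
    rw [hγ₀]; exact mul_ne_zero (ofReal_ne_zero.2 hs₀.ne') (exp_ne_zero _)
  refine ⟨fun s => t₀ + arg (γ s / γ s₀), by simp [div_self hz₀], ?_⟩
  have hslit : ∀ᶠ s in 𝓝 s₀, γ s / γ s₀ ∈ slitPlane := by
    have hcont := hγ.self_of_nhds.1.div_const (γ s₀)
    rw [ContinuousAt, div_self hz₀] at hcont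
    exact hcont.eventually (isOpen_slitPlane.mem_nhds one_mem_slitPlane)
  filter_upwards [hγ, hslit] with s ⟨hcont, hnorm⟩ hs
  refine ⟨continuousAt_const.add
    ((continuousAt_arg hs).comp (f := fun s => γ s / γ s₀) (hcont.div_const _)), ?_⟩
  have hpolar := norm_mul_exp_arg_mul_I (γ s / γ s₀)
  generalize arg (γ s / γ s₀) = θ at hpolar ⊢
  rw [norm_div, hnorm, hγ.self_of_nhds.2, eq_div_iff hz₀, hγ₀] at hpolar
  have hs₀' : (s₀ : ℂ) ≠ 0 := ofReal_ne_zero.2 hs₀.ne'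
  rw [← hpolar, ofReal_add, mul_add, exp_add, ofReal_div]
  field_simp

theorem im_eq_zero_of_tendsto {F : ℂ → ℂ} (hF : Continuous F) {φ : ℝ → ℝ} {a b t : ℝ}
    (hab : a < b) (him : ∀ s ∈ Ioo a b, (F (s * exp (I * φ s))).im = 0)
    (hlim : Tendsto φ (𝓝[<] b) (𝓝 t)) : (F (b * exp (I * t))).im = 0 := by
  have hz : Tendsto (fun s : ℝ => (s : ℂ) * exp (I * φ s)) (𝓝[<] b) (𝓝 (b * exp (I * t))) :=
    (continuous_ofReal.tendsto b |>.mono_left nhdsWithin_le_nhds).mul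
      (((continuous_exp.comp (continuous_const.mul continuous_ofReal)).tendsto t).comp hlim)
  refine tendsto_nhds_unique ((continuous_im.comp hF).continuousAt.tendsto.comp hz)
    (tendsto_const_nhds.congr' ?_)
  filter_upwards [Ioo_mem_nhdsLT hab] with s hs using (him s hs).symm

theorem continuousOn_ite_lt_of_tendsto {α β : Type*} [LinearOrder α] [TopologicalSpace α]
    [OrderTopology α] [TopologicalSpace β] {φ ψ : α → β} {a b c : α} {t : β}
    (hφ : ContinuousOn φ (Ioo a b)) (hlim : Tendsto φ (𝓝[<] b) (𝓝 t))
    (hψ : ∀ s ∈ Ico b c, ContinuousAt ψ s) (hψb : ψ b = t) :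
    ContinuousOn (fun s => if s < b then φ s else ψ s) (Ioo a c) := by
  intro s hs
  rcases lt_trichotomy s b with hsb | rfl | hsb
  · refine ((hφ.continuousAt (Ioo_mem_nhds hs.1 hsb)).congr ?_).continuousWithinAt
    filter_upwards [Iio_mem_nhds hsb] with u hu using (if_pos hu).symm
  · refine (continuousAt_iff_continuous_left'_right'.2 ⟨?_, ?_⟩).continuousWithinAt
    · rw [ContinuousWithinAt, if_neg (lt_irrefl s), hψb]
      exact hlim.congr' (eventually_nhdsWithin_of_forall fun u hu => (if_pos hu).symm)
    · exact (hψ s ⟨le_rfl, hs.2⟩).continuousWithinAt.congr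
        (fun u hu => if_neg (not_lt.2 hu.le)) (if_neg (lt_irrefl s))
  · refine ((hψ s ⟨hsb.le, hs.2⟩).congr ?_).continuousWithinAt
    filter_upwards [Ioi_mem_nhds hsb] with u hu using (if_neg (not_lt.2 hu.le)).symm

theorem crossing_extends_past_endpoint (f : Polynomial ℂ) (a b : ℝ) (ha : 0 < a) (hab : a < b)
    (φ : ℝ → ℝ) (hφ : ContinuousOn φ (Set.Ioo a b))
    (him : ∀ s ∈ Set.Ioo a b, (f.eval ((s : ℂ) * Complex.exp (Complex.I * φ s))).im = 0)
    (tstar : ℝ) (hlim : Filter.Tendsto φ (nhdsWithin b (Set.Iio b)) (nhds tstar))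
    (αstar : ℂ)
    (hαstar : αstar = Complex.I * b * Complex.exp (Complex.I * tstar) *
        f.derivative.eval ((b : ℂ) * Complex.exp (Complex.I * tstar)))
    (hαim : αstar.im ≠ 0) :
    ∃ ε > (0 : ℝ), ∃ φext : ℝ → ℝ,
      ContinuousOn φext (Set.Ioo a (b + ε)) ∧
      (∀ s ∈ Set.Ioo a b, φext s = φ s) ∧
      (∀ s ∈ Set.Ioo a (b + ε),
        (f.eval ((s : ℂ) * Complex.exp (Complex.I * φext s))).im = 0) := by
  have hb : 0 < b := ha.trans hab
  set z₀ : ℂ := b * exp (I * tstar)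
  have hz₀ : ‖z₀‖ = b := by simp [z₀, norm_exp_I_mul_ofReal, abs_of_pos hb]
  have hre : (z₀ * f.derivative.eval z₀).re ≠ 0 := by
    rwa [hαstar, show I * b * exp (I * tstar) * f.derivative.eval z₀ =
      I * (z₀ * f.derivative.eval z₀) by ring, I_mul_im] at hαim
  have him₀ : (f.eval z₀).im = 0 := im_eq_zero_of_tendsto f.continuous hab him hlim
  obtain ⟨γ, hγ₀, hγ⟩ := (f.hasStrictDerivAt z₀).exists_curve_norm_eq_im_eq_zero hre him₀
  rw [hz₀] at hγ₀ hγ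
  obtain ⟨ψ, hψ₀, hψ⟩ :=
    exists_continuous_arg_of_norm_eq hb hγ₀ (hγ.mono fun s hs => ⟨hs.1, hs.2.1⟩)
  obtain ⟨δ, hδ, hnear⟩ := Metric.eventually_nhds_iff.1 (hγ.and hψ)
  have hclose : ∀ s ∈ Ico b (b + δ), dist s b < δ := fun s hs => by
    rw [Real.dist_eq, abs_lt]; constructor <;> linarith [hs.1, hs.2]
  refine ⟨δ, hδ, fun s => if s < b then φ s else ψ s,
    continuousOn_ite_lt_of_tendsto hφ hlim (fun s hs => (hnear (hclose s hs)).2.1) hψ₀,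
    fun s hs => if_pos hs.2, fun s hs => ?_⟩
  dsimp only
  split_ifs with hsb
  · exact him s ⟨hs.1, hsb⟩
  · obtain ⟨⟨-, -, hreal⟩, -, hpolar⟩ := hnear (hclose s ⟨not_lt.1 hsb, hs.2⟩)
    rwa [← hpolar]
end
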